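/- arXiv:2010.06919 — 4 statements merged into one kernel-verified Lean document; each statement's English description precedes it below -/
import Mathlib

section
/- Let h > 0, p ∈ ℕ, and let ξ₀ < ξ₁ < … < ξ_{n+1} be real numbers with |ξ_{i+1} − ξ_i| > 2h for i = 0,…,n. Let q : (ξ₀, ξ_{n+1}) → ℝ be a polynomial of degree at most p on each interval (ξ_i, ξ_{i+1}), i = 0,…,n, and let φ̂ : (−1,1) → ℝ be such that, for some k ∈ ℕ₀, φ̂ is a polynomial of degree at most k on (−1,0) and a polynomial of degree at most k on (0,1). Define Ψ(y) = ∫_{−1}^{1} φ̂(x) q(hx + y) dx for y ∈ (ξ₀ + h, ξ_{n+1} − h). Then: (1) Ψ coincides with a polynomial of degree at most p on (ξ_i + h, ξ_{i+1} − h) for every i = 0,…,n; (2) Ψ coincides with a polynomial of degree at most p+k+1 on (ξ_i, ξ_i + h) for every i = 1,…,n; (3) Ψ coincides with a polynomial of degree at most p+k+1 on (ξ_i − h, ξ_i) for every i = 1,…,n. -/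
open MeasureTheory Set Polynomial

/-! Common definitions: Lebesgue/Sobolev norms on `I = (0,1)`, finite element
spaces on the uniform dyadic grid `T_L`, the singularly perturbed problem
`-δ²u'' + cu = f`, and (Q)TT decompositions of vectors in `ℝ^{2^L}`. -/

/-- Squared `L²(0,1)` norm. -/
noncomputable def L2sq (v : ℝ → ℝ) : ℝ := ∫ x in Ioo (0:ℝ) 1, (v x)^2

/-- `L²(0,1)` norm. -/
noncomputable def L2norm (v : ℝ → ℝ) : ℝ := Real.sqrt (L2sq v)

/-- `H¹(0,1)` norm of a function `v` with derivative `v'`. -/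
noncomputable def H1norm (v v' : ℝ → ℝ) : ℝ := Real.sqrt (L2sq v + L2sq v')

/-- `H²(0,1)` norm of a function `v` with derivatives `v'`, `v''`. -/
noncomputable def H2norm (v v' v'' : ℝ → ℝ) : ℝ := Real.sqrt (L2sq v + L2sq v' + L2sq v'')

/-- Energy norm `‖v‖_δ = (δ²‖v'‖² + ‖v‖²)^(1/2)`. -/
noncomputable def energyNorm (δ : ℝ) (v v' : ℝ → ℝ) : ℝ := Real.sqrt (δ^2 * L2sq v' + L2sq v)

/-- Membership in `L²(0,1)`. -/
def MemL2 (v : ℝ → ℝ) : Prop := IntegrableOn (fun x => (v x)^2) (Ioo (0:ℝ) 1)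

/-- `v ∈ H¹(0,1)` with (weak) derivative `v'`: `v` is absolutely continuous on `[0,1]`
(the fundamental theorem of calculus holds with density `v'`) and `v, v' ∈ L²(0,1)`. -/
def IsH1 (v v' : ℝ → ℝ) : Prop :=
  (∀ x ∈ Icc (0:ℝ) 1, v x = v 0 + ∫ t in (0:ℝ)..x, v' t) ∧
  ContinuousOn v (Icc (0:ℝ) 1) ∧ MemL2 v ∧ MemL2 v'

/-- `v ∈ H²(0,1)` with derivatives `v'` and `v''`. -/
def IsH2 (v v' v'' : ℝ → ℝ) : Prop := IsH1 v v' ∧ IsH1 v' v''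

/-- The bilinear form `a_δ(u,v) = ∫_I (δ² u'v' + c u v)`. -/
noncomputable def aForm (δ : ℝ) (c : ℝ → ℝ) (u u' v v' : ℝ → ℝ) : ℝ :=
  ∫ x in Ioo (0:ℝ) 1, (δ^2 * u' x * v' x + c x * u x * v x)

/-- Mesh width `h = 1/(2^L+1)` of the uniform grid `T_L`. -/
noncomputable def gridh (L : ℕ) : ℝ := 1 / (2^L + 1)

/-- Continuous, piecewise affine functions on the uniform grid `T_L`
with nodes `x_j = j·h`, `j = 0,…,2^L+1`. -/
def PL (L : ℕ) (w : ℝ → ℝ) : Prop :=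
  ContinuousOn w (Icc (0:ℝ) 1) ∧
  ∀ j : ℕ, j < 2^L + 1 →
    ∃ a b : ℝ, ∀ x ∈ Icc ((j:ℝ) * gridh L) (((j:ℝ)+1) * gridh L), w x = a * x + b

/-- `V^L₀`: continuous piecewise affine on `T_L`, vanishing at the endpoints. -/
def PL0 (L : ℕ) (w : ℝ → ℝ) : Prop := PL L w ∧ w 0 = 0 ∧ w 1 = 0

/-- `V^L` with boundary values `α₀`, `α₁`. -/
def MemVL (L : ℕ) (α₀ α₁ : ℝ) (w : ℝ → ℝ) : Prop := PL L w ∧ w 0 = α₀ ∧ w 1 = α₁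

/-- The Lagrange hat function at node `x_i = i·h` of the grid `T_L`. -/
noncomputable def hat (L : ℕ) (i : ℕ) (x : ℝ) : ℝ :=
  max 0 (1 - |x - (i:ℝ) * gridh L| / gridh L)

/-- Membership in `V(I, p, T^hp_κ)`: continuous on `[0,1]`, a polynomial of degree `≤ p`
on each of the three subintervals of the grid `{0, min(1/4,κ), 1-min(1/4,κ), 1}`,
with boundary values `α₀`, `α₁`. -/
def MemVhp (p : ℕ) (κ α₀ α₁ : ℝ) (v : ℝ → ℝ) : Prop :=
  ContinuousOn v (Icc (0:ℝ) 1) ∧ v 0 = α₀ ∧ v 1 = α₁ ∧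
  ∃ P₁ P₂ P₃ : Polynomial ℝ,
    P₁.natDegree ≤ p ∧ P₂.natDegree ≤ p ∧ P₃.natDegree ≤ p ∧
    (∀ x ∈ Icc (0:ℝ) (min (1/4) κ), v x = P₁.eval x) ∧
    (∀ x ∈ Icc (min (1/4) κ) (1 - min (1/4) κ), v x = P₂.eval x) ∧
    (∀ x ∈ Icc (1 - min (1/4) κ) 1, v x = P₃.eval x)

/-- Weak solution `u ∈ H¹(0,1)` (with weak derivative `u'`) of
`-δ²u'' + cu = f` in `(0,1)`, `u(0) = α₀`, `u(1) = α₁`. -/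
def WeakSol (δ : ℝ) (c f : ℝ → ℝ) (α₀ α₁ : ℝ) (u u' : ℝ → ℝ) : Prop :=
  IsH1 u u' ∧ u 0 = α₀ ∧ u 1 = α₁ ∧
  ∀ v v' : ℝ → ℝ, IsH1 v v' → v 0 = 0 → v 1 = 0 →
    aForm δ c u u' v v' = ∫ x in Ioo (0:ℝ) 1, f x * v x

/-- Strong solution `u ∈ H²(0,1)` with homogeneous Dirichlet boundary conditions:
`-δ²u'' + c u = f` a.e. in `(0,1)`, `u(0)=u(1)=0`. -/
def StrongSol0 (δ : ℝ) (c f : ℝ → ℝ) (u u' u'' : ℝ → ℝ) : Prop :=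
  IsH2 u u' u'' ∧ u 0 = 0 ∧ u 1 = 0 ∧
  ∀ᵐ x ∂(volume.restrict (Ioo (0:ℝ) 1)), -δ^2 * u'' x + c x * u x = f x

/-- `Pv` (with derivative `Pv'`) is the Galerkin projection of `v` (with derivative `v'`)
onto `V^L₀`: `Pv ∈ V^L₀` and `a_δ(Pv - v, w) = 0` for all `w ∈ V^L₀`. -/
def IsGalerkin0 (δ : ℝ) (c : ℝ → ℝ) (L : ℕ) (v v' Pv Pv' : ℝ → ℝ) : Prop :=
  PL0 L Pv ∧ IsH1 Pv Pv' ∧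
  ∀ w w' : ℝ → ℝ, PL0 L w → IsH1 w w' →
    aForm δ c (fun x => Pv x - v x) (fun x => Pv' x - v' x) w w' = 0

/-- The `K`-functional between `L²(0,1)` and `H¹₀(0,1)`:
`K(t,v) = inf {‖v₀‖_{L²} + t‖v₁‖_{H¹} : v = v₀ + v₁, v₀ ∈ L², v₁ ∈ H¹₀}`. -/
noncomputable def Kfun (t : ℝ) (v : ℝ → ℝ) : ℝ :=
  sInf {s : ℝ | ∃ v₀ v₁ v₁' : ℝ → ℝ, (∀ x, v x = v₀ x + v₁ x) ∧ MemL2 v₀ ∧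
    IsH1 v₁ v₁' ∧ v₁ 0 = 0 ∧ v₁ 1 = 0 ∧ s = L2norm v₀ + t * H1norm v₁ v₁'}

/-- The set `{K(t,v)/√t : t > 0}` over which the `H^{1/2,∞}` norm is taken. -/
def HhalfSet (v : ℝ → ℝ) : Set ℝ := {s : ℝ | ∃ t : ℝ, 0 < t ∧ s = Kfun t v / Real.sqrt t}

/-- The interpolation norm `‖v‖_{1/2,∞} = sup_{t>0} K(t,v)/t^{1/2}`. -/
noncomputable def HhalfNorm (v : ℝ → ℝ) : ℝ := sSup (HhalfSet v)

/-- `v ∈ H^{1/2,∞}(0,1)`: the sup defining `‖v‖_{1/2,∞}` is finite. -/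
def MemHhalf (v : ℝ → ℝ) : Prop := BddAbove (HhalfSet v)

/-- Partial products `V¹(i₁)⋯Vⁿ(iₙ)` of TT-cores. -/
def qttEntry {rk : ℕ → ℕ}
    (V : ∀ j : ℕ, Fin 2 → Matrix (Fin (rk j)) (Fin (rk (j+1))) ℝ) :
    (n : ℕ) → (Fin n → Fin 2) → Matrix (Fin (rk 0)) (Fin (rk n)) ℝ
  | 0, _ => 1
  | n+1, i => qttEntry V n (fun j => i j.castSucc) * V n (i (Fin.last n))

/-- The binary digits `i_1,…,i_L` of an index `i = Σ_{j=1}^L 2^{L-j} i_j`. -/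
def bits (L : ℕ) (i : ℕ) : Fin L → Fin 2 :=
  fun j => ⟨i / 2^(L - 1 - (j:ℕ)) % 2, Nat.mod_lt _ (by norm_num)⟩

/-- `u ∈ ℝ^{2^L}` admits a QTT decomposition with rank sequence `rk`
(`rk 0 = rk L = 1`): `u(i) = V¹(i₁)⋯V^L(i_L)` for all indices `i`. -/
def HasQTTRanks (L : ℕ) (u : Fin (2^L) → ℝ) (rk : ℕ → ℕ) : Prop :=
  rk 0 = 1 ∧ rk L = 1 ∧
  ∃ V : ∀ j : ℕ, Fin 2 → Matrix (Fin (rk j)) (Fin (rk (j+1))) ℝ,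
    ∀ (i : Fin (2^L)) (a : Fin (rk 0)) (b : Fin (rk L)),
      u i = qttEntry V L (bits L (i:ℕ)) a b

/-- `u ∈ ℝ^{2^L}` admits a QTT decomposition with all ranks `r_1,…,r_{L-1}` bounded by `r`. -/
def HasQTT (L : ℕ) (u : Fin (2^L) → ℝ) (r : ℕ) : Prop :=
  ∃ rk : ℕ → ℕ, HasQTTRanks L u rk ∧ ∀ j : ℕ, 0 < j → j < L → rk j ≤ r

/-- Number of parameters `Σ_{j=1}^L r_{j-1}·2·r_j` of a QTT decomposition with ranks `rk`. -/
def Ndof (L : ℕ) (rk : ℕ → ℕ) : ℕ := ∑ j ∈ Finset.range L, rk j * 2 * rk (j+1)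

/-- Partial products of matrix (operator) TT-cores. -/
def qttEntryM {rk : ℕ → ℕ}
    (V : ∀ j : ℕ, Fin 2 → Fin 2 → Matrix (Fin (rk j)) (Fin (rk (j+1))) ℝ) :
    (n : ℕ) → (Fin n → Fin 2) → (Fin n → Fin 2) → Matrix (Fin (rk 0)) (Fin (rk n)) ℝ
  | 0, _, _ => 1
  | n+1, i, m =>
      qttEntryM V n (fun j => i j.castSucc) (fun j => m j.castSucc) *
        V n (i (Fin.last n)) (m (Fin.last n))

/-- A matrix `A ∈ ℝ^{2^L × 2^L}` admits a matrix QTT decomposition with rank sequence `rk`: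
`A(i,m) = V¹(i₁,m₁)⋯V^L(i_L,m_L)`. -/
def HasMatrixQTTRanks (L : ℕ) (A : Matrix (Fin (2^L)) (Fin (2^L)) ℝ) (rk : ℕ → ℕ) : Prop :=
  rk 0 = 1 ∧ rk L = 1 ∧
  ∃ V : ∀ j : ℕ, Fin 2 → Fin 2 → Matrix (Fin (rk j)) (Fin (rk (j+1))) ℝ,
    ∀ (i m : Fin (2^L)) (a : Fin (rk 0)) (b : Fin (rk L)),
      A i m = qttEntryM V L (bits L (i:ℕ)) (bits L (m:ℕ)) a b

/-!
Taylor-expanding `Q` about `y` separates the variables: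
`∫_a^b P(x) Q(hx + y) dx = ∑_j h^j Q^{[j]}(y) ∫_a^b P(x) x^j dx`, where the Hasse derivative
`Q^{[j]}` has degree `≤ deg Q - j`. For fixed `a, b` this is a polynomial of degree `≤ deg Q` in
`y`; if the limits move affinely with `y`, the factor `∫_a^b P(x) x^j dx` has degree
`≤ deg P + j + 1`, so the total degree is `≤ deg Q + deg P + 1`. On `(ξ_i + h, ξ_{i+1} - h)` the
integral over `[-1, 1]` only splits at `x = 0`, into pieces of the first kind; within distance `h`
of a breakpoint `ξ_i` it also splits where `hx + y = ξ_i`, i.e. at `x = (ξ_i - y) / h`, which is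
affine in `y`.
-/

theorem monotoneOn_Iic_of_le_succ {α : Type*} [Preorder α] {f : ℕ → α} {N : ℕ}
    (hf : ∀ n < N, f n ≤ f (n + 1)) : MonotoneOn f (Iic N) := by
  intro i _ j hj hij
  induction j, hij using Nat.le_induction with
  | base => rfl
  | succ j _ ih => exact (ih (mem_Iic.2 (by grind))).trans (hf j (by grind))

namespace Polynomial

theorem exists_derivative_eq {K : Type*} [Field K] [CharZero K] (P : K[X]) :
    ∃ A : K[X], A.natDegree ≤ P.natDegree + 1 ∧ derivative A = P := by
  refine ⟨∑ i ∈ Finset.range (P.natDegree + 1), C (P.coeff i / (i + 1)) * X ^ (i + 1),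
    natDegree_sum_le_of_forall_le _ _ fun i hi => (natDegree_C_mul_X_pow_le _ _).trans ?_, ?_⟩
  · simpa using Finset.mem_range.mp hi
  · conv_rhs => rw [P.as_sum_range_C_mul_X_pow]
    simp only [derivative_sum, derivative_C_mul_X_pow, Nat.add_sub_cancel]
    refine Finset.sum_congr rfl fun i _ => ?_
    push_cast
    rw [div_mul_cancel₀ _ (Nat.cast_add_one_ne_zero i)]

theorem exists_integral_eval_eq (P : ℝ[X]) :
    ∃ A : ℝ[X], A.natDegree ≤ P.natDegree + 1 ∧
      ∀ a b : ℝ, ∫ x in a..b, P.eval x = A.eval b - A.eval a := by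
  obtain ⟨A, hA, hAP⟩ := P.exists_derivative_eq
  refine ⟨A, hA, fun a b => intervalIntegral.integral_eq_sub_of_hasDerivAt
    (fun x _ => hAP ▸ A.hasDerivAt x) (P.continuous.intervalIntegrable a b)⟩

theorem eval_add_eq_sum_hasseDeriv {R : Type*} [CommSemiring R] (Q : R[X]) (y z : R) :
    Q.eval (z + y) = ∑ j ∈ Finset.range (Q.natDegree + 1), (hasseDeriv j Q).eval y * z ^ j := by
  rw [← taylor_eval, eval_eq_sum_range, natDegree_taylor]
  simp only [taylor_coeff]

theorem integral_eval_mul_eval_mul_add (P Q : ℝ[X]) (h y a b : ℝ) :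
    ∫ x in a..b, P.eval x * Q.eval (h * x + y) =
      ∑ j ∈ Finset.range (Q.natDegree + 1),
        (hasseDeriv j Q).eval y * (h ^ j * ∫ x in a..b, P.eval x * x ^ j) := by
  simp_rw [eval_add_eq_sum_hasseDeriv Q y, Finset.mul_sum]
  rw [intervalIntegral.integral_finsetSum fun j _ => by
    apply Continuous.intervalIntegrable; fun_prop]
  refine Finset.sum_congr rfl fun j _ => ?_
  rw [← intervalIntegral.integral_const_mul, ← intervalIntegral.integral_const_mul]
  congr 1 with x
  ring

end Polynomial

def IsPolynomialOn (d : ℕ) (s : Set ℝ) (f : ℝ → ℝ) : Prop :=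
  ∃ Q : ℝ[X], Q.natDegree ≤ d ∧ ∀ y ∈ s, f y = Q.eval y

namespace IsPolynomialOn

variable {d e : ℕ} {s : Set ℝ} {f g : ℝ → ℝ}

theorem of_polynomial (Q : ℝ[X]) : IsPolynomialOn Q.natDegree s Q.eval :=
  ⟨Q, le_rfl, fun _ _ => rfl⟩

theorem const (c : ℝ) : IsPolynomialOn 0 s fun _ => c := ⟨C c, by simp, by simp⟩

theorem affine (a b : ℝ) : IsPolynomialOn 1 s fun y => a * y + b :=
  ⟨C a * X + C b, natDegree_linear_le, by simp⟩

theorem mono (hf : IsPolynomialOn d s f) (hde : d ≤ e) : IsPolynomialOn e s f :=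
  let ⟨Q, hQ, hfQ⟩ := hf
  ⟨Q, hQ.trans hde, hfQ⟩

theorem congr (hf : IsPolynomialOn d s f) (hfg : ∀ y ∈ s, g y = f y) : IsPolynomialOn d s g :=
  let ⟨Q, hQ, hfQ⟩ := hf
  ⟨Q, hQ, fun y hy => (hfg y hy).trans (hfQ y hy)⟩

theorem add (hf : IsPolynomialOn d s f) (hg : IsPolynomialOn d s g) :
    IsPolynomialOn d s (f + g) :=
  let ⟨Q, hQ, hfQ⟩ := hf
  let ⟨R, hR, hgR⟩ := hg
  ⟨Q + R, (natDegree_add_le _ _).trans (max_le hQ hR),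
    fun y hy => by simp [hfQ y hy, hgR y hy]⟩

theorem sub (hf : IsPolynomialOn d s f) (hg : IsPolynomialOn d s g) :
    IsPolynomialOn d s (f - g) :=
  let ⟨Q, hQ, hfQ⟩ := hf
  let ⟨R, hR, hgR⟩ := hg
  ⟨Q - R, (natDegree_sub_le _ _).trans (max_le hQ hR),
    fun y hy => by simp [hfQ y hy, hgR y hy]⟩

theorem mul (hf : IsPolynomialOn d s f) (hg : IsPolynomialOn e s g) :
    IsPolynomialOn (d + e) s (f * g) :=
  let ⟨Q, hQ, hfQ⟩ := hf
  let ⟨R, hR, hgR⟩ := hg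
  ⟨Q * R, natDegree_mul_le.trans (add_le_add hQ hR), fun y hy => by simp [hfQ y hy, hgR y hy]⟩

theorem const_mul (hf : IsPolynomialOn d s f) (c : ℝ) : IsPolynomialOn d s fun y => c * f y :=
  let ⟨Q, hQ, hfQ⟩ := hf
  ⟨C c * Q, (natDegree_C_mul_le c Q).trans hQ, fun y hy => by simp [hfQ y hy]⟩

theorem sum {ι : Type*} (t : Finset ι) {f : ι → ℝ → ℝ}
    (hf : ∀ j ∈ t, IsPolynomialOn d s (f j)) :
    IsPolynomialOn d s fun y => ∑ j ∈ t, f j y := by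
  classical
  induction t using Finset.induction_on with
  | empty => simpa using (const (s := s) 0).mono (Nat.zero_le d)
  | insert j t hj ih =>
    simp_rw [Finset.sum_insert hj]
    exact (hf j (t.mem_insert_self j)).add (ih fun i hi => hf i (Finset.mem_insert_of_mem hi))

theorem eval_comp (hf : IsPolynomialOn 1 s f) (A : ℝ[X]) :
    IsPolynomialOn A.natDegree s fun y => A.eval (f y) :=
  let ⟨Q, hQ, hfQ⟩ := hf
  ⟨A.comp Q, natDegree_comp_le.trans (mul_le_of_le_one_right (Nat.zero_le _) hQ),
    fun y hy => by simp [hfQ y hy]⟩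

end IsPolynomialOn

theorem isPolynomialOn_integral_eval_mul_eval (P Q : ℝ[X]) (h a b : ℝ) (s : Set ℝ) :
    IsPolynomialOn Q.natDegree s fun y => ∫ x in a..b, P.eval x * Q.eval (h * x + y) := by
  simp_rw [integral_eval_mul_eval_mul_add]
  refine IsPolynomialOn.sum _ fun j _ => ?_
  exact ((IsPolynomialOn.of_polynomial _).mul (IsPolynomialOn.const _)).mono
    ((natDegree_hasseDeriv_le Q j).trans (Nat.sub_le _ _))

theorem isPolynomialOn_integral_eval_mul_eval_of_bounds (P Q : ℝ[X]) (h : ℝ) {s : Set ℝ}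
    {a b : ℝ → ℝ}     (ha : IsPolynomialOn 1 s a) (hb : IsPolynomialOn 1 s b) :
    IsPolynomialOn (Q.natDegree + P.natDegree + 1) s
      fun y => ∫ x in a y..b y, P.eval x * Q.eval (h * x + y) := by
  simp_rw [integral_eval_mul_eval_mul_add]
  refine IsPolynomialOn.sum _ fun j hj => ?_
  obtain ⟨A, hA, hAint⟩ := (P * X ^ j).exists_integral_eval_eq
  have hPX : (P * X ^ j).natDegree ≤ P.natDegree + j :=
    natDegree_mul_le.trans (Nat.add_le_add_left (natDegree_X_pow_le j) _)
  have hint :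
      IsPolynomialOn A.natDegree s fun y => h ^ j * ∫ x in a y..b y, P.eval x * x ^ j :=
    (((hb.eval_comp A).sub (ha.eval_comp A)).const_mul (h ^ j)).congr
      fun y _ => by simp [← hAint]
  have hH := natDegree_hasseDeriv_le Q j
  have hjQ := Finset.mem_range.mp hj
  exact ((IsPolynomialOn.of_polynomial _).mul hint).mono (by omega)

theorem IsPolynomialOn.integral_of_eqOn {f g : ℝ → ℝ → ℝ} {s : Set ℝ} {a b : ℝ → ℝ}
    {d : ℕ} (hg : IsPolynomialOn d s fun y => ∫ x in a y..b y, g y x)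
    (hgc : ∀ y, Continuous (g y))
    (hab : ∀ y ∈ s, a y ≤ b y) (hfg : ∀ y ∈ s, EqOn (f y) (g y) (Ioo (a y) (b y))) :
    (∀ y ∈ s, IntervalIntegrable (f y) volume (a y) (b y)) ∧
      IsPolynomialOn d s fun y => ∫ x in a y..b y, f y x := by
  have hfg' : ∀ y ∈ s, EqOn (f y) (g y) (uIoo (a y) (b y)) := fun y hy =>
    uIoo_of_le (hab y hy) ▸ hfg y hy
  exact ⟨fun y hy => ((hgc y).intervalIntegrable _ _).congr_uIoo (hfg' y hy).symm,
    hg.congr fun y hy => intervalIntegral.integral_congr_uIoo (hfg' y hy)⟩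

noncomputable def mollify (φ q : ℝ → ℝ) (h y : ℝ) : ℝ :=
  ∫ x in (-1 : ℝ)..1, φ x * q (h * x + y)

section Mollify

variable {φ q : ℝ → ℝ} {h : ℝ}

theorem eqOn_mul_comp_of_eqOn {P Q : ℝ[X]} {a b u v y α β : ℝ} (hh : 0 < h)
    (hφ : EqOn φ P.eval (Ioo a b)) (hq : EqOn q Q.eval (Ioo u v))
    (haα : a ≤ α) (hβb : β ≤ b) (hu : u ≤ h * α + y) (hv : h * β + y ≤ v) :
    EqOn (fun x => φ x * q (h * x + y)) (fun x => P.eval x * Q.eval (h * x + y)) (Ioo α β) := by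
  intro x hx
  have hαx : h * α < h * x := mul_lt_mul_of_pos_left hx.1 hh
  have hxβ : h * x < h * β := mul_lt_mul_of_pos_left hx.2 hh
  have hqx : q (h * x + y) = Q.eval (h * x + y) := hq ⟨by linarith, by linarith⟩
  simp only [hφ ⟨haα.trans_lt hx.1, hx.2.trans_le hβb⟩, hqx]

theorem isPolynomialOn_mollify_of_eqOn {P₁ P₂ Q : ℝ[X]} {u v : ℝ} {p : ℕ} (hh : 0 < h)
    (hφ₁ : EqOn φ P₁.eval (Ioo (-1) 0)) (hφ₂ : EqOn φ P₂.eval (Ioo 0 1))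
    (hQ : Q.natDegree ≤ p) (hq : EqOn q Q.eval (Ioo u v)) :
    IsPolynomialOn p (Ioo (u + h) (v - h)) (mollify φ q h) := by
  set s := Ioo (u + h) (v - h)
  obtain ⟨int₁, poly₁⟩ :=
    (isPolynomialOn_integral_eval_mul_eval P₁ Q h (-1) 0 s).integral_of_eqOn
      (fun _ => by fun_prop) (fun _ _ => by norm_num) fun y hy =>
        eqOn_mul_comp_of_eqOn hh hφ₁ hq le_rfl le_rfl (by linarith [hy.1]) (by linarith [hy.2])
  obtain ⟨int₂, poly₂⟩ :=
    (isPolynomialOn_integral_eval_mul_eval P₂ Q h 0 1 s).integral_of_eqOn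
      (fun _ => by fun_prop) (fun _ _ => by norm_num) fun y hy =>
        eqOn_mul_comp_of_eqOn hh hφ₂ hq le_rfl le_rfl (by linarith [hy.1]) (by linarith [hy.2])
  exact ((poly₁.add poly₂).mono hQ).congr fun y hy =>
    (intervalIntegral.integral_add_adjacent_intervals (int₁ y hy) (int₂ y hy)).symm

theorem isPolynomialOn_mollify_right_of_breakpoint {P₁ P₂ Qa Qb : ℝ[X]} {u ξ v : ℝ}
    {p k : ℕ} (hh : 0 < h) (hφ₁ : EqOn φ P₁.eval (Ioo (-1) 0))
    (hφ₂ : EqOn φ P₂.eval (Ioo 0 1)) (hP₁ : P₁.natDegree ≤ k)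
    (hQa : Qa.natDegree ≤ p) (hQb : Qb.natDegree ≤ p)
    (hqa : EqOn q Qa.eval (Ioo u ξ)) (hqb : EqOn q Qb.eval (Ioo ξ v))
    (hu : u + h ≤ ξ) (hv : ξ + 2 * h ≤ v) :
    IsPolynomialOn (p + k + 1) (Ioo ξ (ξ + h)) (mollify φ q h) := by
  set s := Ioo ξ (ξ + h)
  let t : ℝ → ℝ := fun y => (ξ - y) / h
  have ht : IsPolynomialOn 1 s t :=
    (IsPolynomialOn.affine (-h⁻¹) (ξ / h)).congr fun y _ => by ring
  have hcross : ∀ y, h * t y + y = ξ := fun y => by simp only [t]; field_simp; ring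
  have hlo : ∀ y ∈ s, -1 ≤ t y := fun y hy => by rw [le_div_iff₀ hh]; linarith [hy.2]
  have hhi : ∀ y ∈ s, t y ≤ 0 := fun y hy =>
    div_nonpos_of_nonpos_of_nonneg (by linarith [hy.1]) hh.le
  have hconst (c : ℝ) : IsPolynomialOn 1 s fun _ => c :=
    (IsPolynomialOn.const c).mono zero_le_one
  obtain ⟨int₁, poly₁⟩ :=
    (isPolynomialOn_integral_eval_mul_eval_of_bounds P₁ Qa h (hconst (-1)) ht).integral_of_eqOn
      (fun _ => by fun_prop) hlo fun y hy => eqOn_mul_comp_of_eqOn hh hφ₁ hqa le_rfl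
        (hhi y hy) (by linarith [hy.1]) (hcross y).le
  obtain ⟨int₂, poly₂⟩ :=
    (isPolynomialOn_integral_eval_mul_eval_of_bounds P₁ Qb h ht (hconst 0)).integral_of_eqOn
      (fun _ => by fun_prop) hhi fun y hy => eqOn_mul_comp_of_eqOn hh hφ₁ hqb (hlo y hy)
        le_rfl (hcross y).ge (by linarith [hy.2])
  obtain ⟨int₃, poly₃⟩ :=
    (isPolynomialOn_integral_eval_mul_eval P₂ Qb h 0 1 s).integral_of_eqOn
      (fun _ => by fun_prop) (fun _ _ => zero_le_one) fun y hy =>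
        eqOn_mul_comp_of_eqOn hh hφ₂ hqb le_rfl le_rfl (by linarith [hy.1]) (by linarith [hy.2])
  refine (((poly₁.mono ?_).add (poly₂.mono ?_)).add (poly₃.mono ?_)).congr fun y hy => ?_
  · omega
  · omega
  · omega
  · rw [mollify, ← intervalIntegral.integral_add_adjacent_intervals (int₁ y hy)
      ((int₂ y hy).trans (int₃ y hy)), ← intervalIntegral.integral_add_adjacent_intervals
      (int₂ y hy) (int₃ y hy), add_assoc]
    rfl

theorem isPolynomialOn_mollify_left_of_breakpoint {P₁ P₂ Qa Qb : ℝ[X]} {u ξ v : ℝ}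
    {p k : ℕ} (hh : 0 < h) (hφ₁ : EqOn φ P₁.eval (Ioo (-1) 0))
    (hφ₂ : EqOn φ P₂.eval (Ioo 0 1)) (hP₂ : P₂.natDegree ≤ k)
    (hQa : Qa.natDegree ≤ p) (hQb : Qb.natDegree ≤ p)
    (hqa : EqOn q Qa.eval (Ioo u ξ)) (hqb : EqOn q Qb.eval (Ioo ξ v))
    (hu : u + 2 * h ≤ ξ) (hv : ξ + h ≤ v) :
    IsPolynomialOn (p + k + 1) (Ioo (ξ - h) ξ) (mollify φ q h) := by
  set s := Ioo (ξ - h) ξ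
  let t : ℝ → ℝ := fun y => (ξ - y) / h
  have ht : IsPolynomialOn 1 s t :=
    (IsPolynomialOn.affine (-h⁻¹) (ξ / h)).congr fun y _ => by ring
  have hcross : ∀ y, h * t y + y = ξ := fun y => by simp only [t]; field_simp; ring
  have hlo : ∀ y ∈ s, 0 ≤ t y := fun y hy => div_nonneg (by linarith [hy.2]) hh.le
  have hhi : ∀ y ∈ s, t y ≤ 1 := fun y hy => by rw [div_le_one hh]; linarith [hy.1]
  have hconst (c : ℝ) : IsPolynomialOn 1 s fun _ => c :=
    (IsPolynomialOn.const c).mono zero_le_one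
  obtain ⟨int₁, poly₁⟩ :=
    (isPolynomialOn_integral_eval_mul_eval P₁ Qa h (-1) 0 s).integral_of_eqOn
      (fun _ => by fun_prop) (fun _ _ => by norm_num) fun y hy =>
        eqOn_mul_comp_of_eqOn hh hφ₁ hqa le_rfl le_rfl (by linarith [hy.1]) (by linarith [hy.2])
  obtain ⟨int₂, poly₂⟩ :=
    (isPolynomialOn_integral_eval_mul_eval_of_bounds P₂ Qa h (hconst 0) ht).integral_of_eqOn
      (fun _ => by fun_prop) hlo fun y hy => eqOn_mul_comp_of_eqOn hh hφ₂ hqa le_rfl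
        (hhi y hy) (by linarith [hy.1]) (hcross y).le
  obtain ⟨int₃, poly₃⟩ :=
    (isPolynomialOn_integral_eval_mul_eval_of_bounds P₂ Qb h ht (hconst 1)).integral_of_eqOn
      (fun _ => by fun_prop) hhi fun y hy => eqOn_mul_comp_of_eqOn hh hφ₂ hqb (hlo y hy)
        le_rfl (hcross y).ge (by linarith [hy.2])
  refine (((poly₁.mono ?_).add (poly₂.mono ?_)).add (poly₃.mono ?_)).congr fun y hy => ?_
  · omega
  · omega
  · omega
  · rw [mollify, ← intervalIntegral.integral_add_adjacent_intervals (int₁ y hy)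
      ((int₂ y hy).trans (int₃ y hy)), ← intervalIntegral.integral_add_adjacent_intervals
      (int₂ y hy) (int₃ y hy), add_assoc]
    rfl

end Mollify

theorem stmt2_general (h : ℝ) (hh : 0 < h) (p : ℕ) (n : ℕ) (ξ : ℕ → ℝ)
    (hgap : ∀ i ≤ n, 2 * h < ξ (i+1) - ξ i)
    (q : ℝ → ℝ)
    (hq : ∀ i ≤ n, ∃ Q : Polynomial ℝ, Q.natDegree ≤ p ∧
      ∀ x ∈ Ioo (ξ i) (ξ (i+1)), q x = Q.eval x)
    (k : ℕ) (φ : ℝ → ℝ)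
    (hφ₁ : ∃ Q : Polynomial ℝ, Q.natDegree ≤ k ∧ ∀ x ∈ Ioo (-1:ℝ) 0, φ x = Q.eval x)
    (hφ₂ : ∃ Q : Polynomial ℝ, Q.natDegree ≤ k ∧ ∀ x ∈ Ioo (0:ℝ) 1, φ x = Q.eval x)
    (Ψ : ℝ → ℝ)
    (hΨ : ∀ y ∈ Ioo (ξ 0 + h) (ξ (n+1) - h), Ψ y = ∫ x in (-1:ℝ)..1, φ x * q (h * x + y)) :
    (∀ i ≤ n, ∃ Q : Polynomial ℝ, Q.natDegree ≤ p ∧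
      ∀ y ∈ Ioo (ξ i + h) (ξ (i+1) - h), Ψ y = Q.eval y) ∧
    (∀ i, 1 ≤ i → i ≤ n → ∃ Q : Polynomial ℝ, Q.natDegree ≤ p + k + 1 ∧
      ∀ y ∈ Ioo (ξ i) (ξ i + h), Ψ y = Q.eval y) ∧
    (∀ i, 1 ≤ i → i ≤ n → ∃ Q : Polynomial ℝ, Q.natDegree ≤ p + k + 1 ∧
      ∀ y ∈ Ioo (ξ i - h) (ξ i), Ψ y = Q.eval y) := by
  obtain ⟨P₁, hP₁, hφ₁⟩ := hφ₁
  obtain ⟨P₂, hP₂, hφ₂⟩ := hφ₂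
  have hξ : MonotoneOn ξ (Iic (n + 1)) :=
    monotoneOn_Iic_of_le_succ fun i hi => by linarith [hgap i (by omega)]
  have of_mollify {d : ℕ} {s : Set ℝ} (hs : s ⊆ Ioo (ξ 0 + h) (ξ (n+1) - h))
      (hpoly : IsPolynomialOn d s (mollify φ q h)) : IsPolynomialOn d s Ψ :=
    hpoly.congr fun y hy => hΨ y (hs hy)
  have hbreak : ∀ i, 1 ≤ i → i ≤ n →
      IsPolynomialOn (p + k + 1) (Ioo (ξ i) (ξ i + h)) Ψ ∧
        IsPolynomialOn (p + k + 1) (Ioo (ξ i - h) (ξ i)) Ψ := by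
    intro i hi₁ hin
    obtain ⟨Qa, hQa, hqa⟩ := hq (i - 1) (by omega)
    obtain ⟨Qb, hQb, hqb⟩ := hq i hin
    have hgapa := hgap (i - 1) (by omega)
    rw [Nat.sub_add_cancel hi₁] at hqa hgapa
    have hgapb := hgap i hin
    have hξ₀ := hξ (mem_Iic.2 (by omega)) (mem_Iic.2 (by omega)) (Nat.zero_le (i - 1))
    have hξₙ := hξ (mem_Iic.2 (by omega)) (mem_Iic.2 le_rfl) (by omega : i + 1 ≤ n + 1)
    exact ⟨of_mollify (Ioo_subset_Ioo (by linarith) (by linarith))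
        (isPolynomialOn_mollify_right_of_breakpoint hh hφ₁ hφ₂ hP₁ hQa hQb hqa hqb
          (by linarith) (by linarith)),
      of_mollify (Ioo_subset_Ioo (by linarith) (by linarith))
        (isPolynomialOn_mollify_left_of_breakpoint hh hφ₁ hφ₂ hP₂ hQa hQb hqa hqb
          (by linarith) (by linarith))⟩
  refine ⟨fun i hi => ?_, fun i hi₁ hin => (hbreak i hi₁ hin).1,
    fun i hi₁ hin => (hbreak i hi₁ hin).2⟩
  obtain ⟨Q, hQ, hqQ⟩ := hq i hi
  refine of_mollify (Ioo_subset_Ioo ?_ ?_) (isPolynomialOn_mollify_of_eqOn hh hφ₁ hφ₂ hQ hqQ)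
  · linarith [hξ (mem_Iic.2 (by omega)) (mem_Iic.2 (by omega)) (Nat.zero_le i)]
  · linarith [hξ (mem_Iic.2 (by omega)) (mem_Iic.2 le_rfl) (by omega : i + 1 ≤ n + 1)]

/-- local polynomial structure of the mollified function `Ψ`:
if `q` is piecewise polynomial of degree `≤ p` on the partition `ξ₀ < … < ξ_{n+1}`
with all gaps `> 2h`, and `φ̂` is polynomial of degree `≤ k` on `(-1,0)` and on `(0,1)`,
then `Ψ(y) = ∫_{-1}^1 φ̂(x) q(hx+y) dx` is polynomial of degree `≤ p` on each
`(ξ_i + h, ξ_{i+1} - h)` and of degree `≤ p+k+1` on each `(ξ_i, ξ_i+h)` and `(ξ_i-h, ξ_i)`,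
`i = 1,…,n`. -/
theorem stmt2 (h : ℝ) (hh : 0 < h) (p : ℕ) (hp : 0 < p) (n : ℕ) (ξ : ℕ → ℝ)
    (hgap : ∀ i ≤ n, 2 * h < ξ (i+1) - ξ i)
    (q : ℝ → ℝ)
    (hq : ∀ i ≤ n, ∃ Q : Polynomial ℝ, Q.natDegree ≤ p ∧
      ∀ x ∈ Ioo (ξ i) (ξ (i+1)), q x = Q.eval x)
    (k : ℕ) (φ : ℝ → ℝ)
    (hφ₁ : ∃ Q : Polynomial ℝ, Q.natDegree ≤ k ∧ ∀ x ∈ Ioo (-1:ℝ) 0, φ x = Q.eval x)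
    (hφ₂ : ∃ Q : Polynomial ℝ, Q.natDegree ≤ k ∧ ∀ x ∈ Ioo (0:ℝ) 1, φ x = Q.eval x)
    (Ψ : ℝ → ℝ)
    (hΨ : ∀ y ∈ Ioo (ξ 0 + h) (ξ (n+1) - h), Ψ y = ∫ x in (-1:ℝ)..1, φ x * q (h * x + y)) :
    (∀ i ≤ n, ∃ Q : Polynomial ℝ, Q.natDegree ≤ p ∧
      ∀ y ∈ Ioo (ξ i + h) (ξ (i+1) - h), Ψ y = Q.eval y) ∧
    (∀ i, 1 ≤ i → i ≤ n → ∃ Q : Polynomial ℝ, Q.natDegree ≤ p + k + 1 ∧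
      ∀ y ∈ Ioo (ξ i) (ξ i + h), Ψ y = Q.eval y) ∧
    (∀ i, 1 ≤ i → i ≤ n → ∃ Q : Polynomial ℝ, Q.natDegree ≤ p + k + 1 ∧
      ∀ y ∈ Ioo (ξ i - h) (ξ i), Ψ y = Q.eval y) :=
  stmt2_general h hh p n ξ hgap q hq k φ hφ₁ hφ₂ Ψ hΨ
end

section
/- Let L, M ∈ ℕ, p₁,…,p_M ∈ ℕ₀, and let 0 = x₀ < x₁ < … < x_M = 2^L − 1 be real numbers. Let u be a function equal to a polynomial P_m of degree p_m on [x_{m−1}, x_m) for 1 ≤ m ≤ M and with u(x_M) = P_M(x_M). Then the vector u⃗ = (u(0), u(1), …, u(2^L − 1)) ∈ ℝ^{2^L} admits a QTT decomposition with ranks bounded by P + M, where P = max{p₁,…,p_M}. -/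
open MeasureTheory Set Polynomial

/-!
The `j`-th rank of the decomposition is the dimension of the span of the `2^j` consecutive
blocks of length `2^(L-j)` of `u` (the column space of the `j`-th unfolding). Either half of a
level-`j` block is a level-`(j+1)` block, so a spanning family at each level expands in the one
at the next level, and the coefficient matrices are the TT cores.

A block inside a single piece is a polynomial of degree `≤ P` read off on `{0, …, 2^(L-j) - 1}`,
and these span a space of dimension `≤ P + 1`; the piece index is monotone along the blocks, so
at most `M - 1` of them meet two pieces. Hence each rank is at most `P + 1 + (M - 1)`.
-/

open Module Submodule Matrix

theorem mulVec_qttEntry_bits {L : ℕ} {rk : ℕ → ℕ}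
    (V : ∀ j : ℕ, Fin 2 → Matrix (Fin (rk j)) (Fin (rk (j+1))) ℝ)
    (g : ∀ j, Fin (rk j) → ℕ → ℝ)
    (hV : ∀ j < L, ∀ (i : Fin 2) (b : ℕ), b < 2^(L-(j+1)) →
      (fun k => g j k (i * 2^(L-(j+1)) + b)) = V j i *ᵥ fun l => g (j+1) l b)
    {t : ℕ} (ht : t < 2^L) {n : ℕ} (hn : n ≤ L) :
    (fun k => g 0 k t) = qttEntry V n (fun j => bits L t (Fin.castLE hn j)) *ᵥ
      fun l => g n l (t % 2^(L-n)) := by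
  induction n with
  | zero => simp [qttEntry, Nat.mod_eq_of_lt ht]
  | succ n ih =>
    have hnL : n < L := hn
    have hsplit : t % 2^(L-n) = bits L t ⟨n, hnL⟩ * 2^(L-(n+1)) + t % 2^(L-(n+1)) := by
      simp only [bits, show L - 1 - n = L - (n+1) by omega]
      rw [show L - n = L - (n+1) + 1 by omega, Nat.mod_pow_succ]
      ring
    rw [ih hnL.le, hsplit, hV n hnL _ _ (Nat.mod_lt _ (by positivity)), mulVec_mulVec]
    rfl

/-- The block of `f` of length `N` starting at `s`, extended by zero. -/
def block (N s : ℕ) : (ℕ → ℝ) →ₗ[ℝ] (ℕ → ℝ) :=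
  LinearMap.pi fun b => if b < N then LinearMap.proj (s + b) else 0

theorem block_apply (N s : ℕ) (f : ℕ → ℝ) (b : ℕ) :
    block N s f b = if b < N then f (s + b) else 0 := by
  by_cases hb : b < N <;> simp [block, hb]

theorem block_block {N N' s s' : ℕ} (h : s' + N' ≤ N) (f : ℕ → ℝ) :
    block N' s' (block N s f) = block N' (s + s') f := by
  ext b
  simp only [block_apply]
  split_ifs <;> first | rfl | omega | (congr 1; ring)

theorem hasQTTRanks_of_block_mem_span {L : ℕ} {u : ℕ → ℝ} {rk : ℕ → ℕ}
    (h0 : rk 0 = 1) (hL : rk L = 1) (g : ∀ j, Fin (rk j) → ℕ → ℝ)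
    (hg0 : ∀ k t, t < 2^L → g 0 k t = u t) (hgL : ∀ l, g L l 0 = 1)
    (hnest : ∀ j < L, ∀ (i : Fin 2) k,
      block (2^(L-(j+1))) (i * 2^(L-(j+1))) (g j k) ∈ span ℝ (range (g (j+1)))) :
    HasQTTRanks L (fun i : Fin (2^L) => u i) rk := by
  have hcore : ∀ j < L, ∀ i : Fin 2, ∃ C : Matrix (Fin (rk j)) (Fin (rk (j+1))) ℝ,
      ∀ b < 2^(L-(j+1)),
        (fun k => g j k (i * 2^(L-(j+1)) + b)) = C *ᵥ fun l => g (j+1) l b := by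
    intro j hj i
    choose c hc using fun k => (mem_span_range_iff_exists_fun ℝ).1 (hnest j hj i k)
    refine ⟨Matrix.of c, fun b hb => funext fun k => ?_⟩
    have := congr_fun (hc k) b
    simp only [block_apply, hb, if_true, Finset.sum_apply, Pi.smul_apply, smul_eq_mul] at this
    rw [← this]
    rfl
  choose C hC using hcore
  let V : ∀ j, Fin 2 → Matrix (Fin (rk j)) (Fin (rk (j+1))) ℝ :=
    fun j i => if h : j < L then C j h i else 0
  refine ⟨h0, hL, V, fun i a b => ?_⟩
  have hV : ∀ j < L, ∀ (i : Fin 2) (b : ℕ), b < 2^(L-(j+1)) →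
      (fun k => g j k (i * 2^(L-(j+1)) + b)) = V j i *ᵥ fun l => g (j+1) l b := by
    intro j hj i b hb
    simp only [V, dif_pos hj]
    exact hC j hj i b hb
  have : Subsingleton (Fin (rk L)) := by rw [hL]; infer_instance
  refine (hg0 a i i.isLt).symm.trans ?_
  rw [congr_fun (mulVec_qttEntry_bits V g hV i.isLt le_rfl) a, Nat.sub_self, pow_zero,
    Nat.mod_one]
  simp only [mulVec, dotProduct, hgL, mul_one]
  exact Fintype.sum_subsingleton _ b

def blockSpan (N K : ℕ) (u : ℕ → ℝ) : Submodule ℝ (ℕ → ℝ) :=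
  span ℝ (range fun a : Fin K => block N (a * N) u)

instance (N K : ℕ) (u : ℕ → ℝ) : FiniteDimensional ℝ (blockSpan N K u) :=
  FiniteDimensional.span_of_finite ℝ (finite_range _)

theorem block_mem_blockSpan {N K a : ℕ} (ha : a < K) (u : ℕ → ℝ) :
    block N (a * N) u ∈ blockSpan N K u :=
  subset_span ⟨⟨a, ha⟩, rfl⟩

theorem block_mem_blockSpan_two_mul {N K : ℕ} {u f : ℕ → ℝ}
    (hf : f ∈ blockSpan (2 * N) K u) {i : ℕ} (hi : i < 2) :
    block N (i * N) f ∈ blockSpan N (2 * K) u := by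
  refine (map_le_iff_le_comap.2 ?_) (mem_map_of_mem hf)
  refine span_le.2 ?_
  rintro _ ⟨a, rfl⟩
  rw [SetLike.mem_coe, mem_comap, block_block (by nlinarith),
    show a * (2 * N) + i * N = (2 * a + i) * N by ring]
  exact block_mem_blockSpan (by omega) u

theorem block_one (s : ℕ) (f : ℕ → ℝ) : block 1 s f = f s • block 1 0 1 := by
  ext b
  simp only [block_apply, Pi.smul_apply, smul_eq_mul, Nat.lt_one_iff]
  split_ifs with hb <;> simp [hb]

section PaddedBasis

variable {K E : Type*} [Field K] [AddCommGroup E] [Module K E]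

noncomputable def paddedBasis (S : Submodule K E) [FiniteDimensional K S] (n : ℕ) : Fin n → E :=
  fun k => if h : (k : ℕ) < finrank K S then (finBasis K S ⟨k, h⟩ : E) else 0

variable (S : Submodule K E) [FiniteDimensional K S] {n : ℕ}

theorem paddedBasis_mem (k : Fin n) : paddedBasis S n k ∈ S := by
  unfold paddedBasis
  split_ifs
  exacts [coe_mem _, zero_mem S]

theorem span_range_paddedBasis (hn : finrank K S ≤ n) : span K (range (paddedBasis S n)) = S := by
  refine le_antisymm (span_le.2 (range_subset_iff.2 (paddedBasis_mem S))) fun x hx => ?_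
  obtain ⟨c, rfl⟩ := (finBasis K S).mem_submodule_iff'.1 hx
  refine sum_mem fun k _ => smul_mem _ _ (subset_span ⟨⟨k, k.isLt.trans_le hn⟩, ?_⟩)
  simp [paddedBasis]

end PaddedBasis

section Levels

variable (L : ℕ) (u : ℕ → ℝ)

noncomputable def levelRank (j : ℕ) : ℕ :=
  if 0 < j ∧ j < L then finrank ℝ (blockSpan (2^(L-j)) (2^j) u) else 1

noncomputable def levelFamily (j : ℕ) : Fin (levelRank L u j) → ℕ → ℝ :=
  if j = 0 then fun _ => block (2^L) 0 u
  else if j < L then paddedBasis (blockSpan (2^(L-j)) (2^j) u) (levelRank L u j)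
  else fun _ => block 1 0 1

theorem levelRank_of_pos_of_lt {j : ℕ} (h0 : 0 < j) (hj : j < L) :
    levelRank L u j = finrank ℝ (blockSpan (2^(L-j)) (2^j) u) :=
  if_pos ⟨h0, hj⟩

theorem levelFamily_mem {j : ℕ} (hj : j < L) (k : Fin (levelRank L u j)) :
    levelFamily L u j k ∈ blockSpan (2^(L-j)) (2^j) u := by
  unfold levelFamily
  split_ifs with h0
  · subst h0
    simpa using block_mem_blockSpan (N := 2^L) zero_lt_one u
  · exact paddedBasis_mem _ k

theorem blockSpan_le_span_levelFamily {j : ℕ} (h0 : 0 < j) (hj : j ≤ L) :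
    blockSpan (2^(L-j)) (2^j) u ≤ span ℝ (range (levelFamily L u j)) := by
  rcases hj.lt_or_eq with hj | rfl
  · rw [levelFamily, if_neg h0.ne', if_pos hj,
      span_range_paddedBasis _ (levelRank_of_pos_of_lt L u h0 hj).ge]
  · have hone : levelRank j u j = 1 := if_neg (by omega)
    have hδ : block 1 0 1 ∈ span ℝ (range (levelFamily j u j)) := by
      refine subset_span ⟨⟨0, by omega⟩, ?_⟩
      simp [levelFamily, h0.ne']
    rw [Nat.sub_self, pow_zero, blockSpan, span_le]
    rintro _ ⟨a, rfl⟩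
    change block 1 (a * 1) u ∈ _
    rw [block_one]
    exact smul_mem _ _ hδ

theorem hasQTTRanks_levelRank (hL : 0 < L) :
    HasQTTRanks L (fun i : Fin (2^L) => u i) (levelRank L u) := by
  refine hasQTTRanks_of_block_mem_span (if_neg (by omega)) (if_neg (by omega)) (levelFamily L u)
    (fun k t ht => by rw [levelFamily, if_pos rfl, block_apply, if_pos ht, zero_add])
    (fun l => by
      rw [levelFamily, if_neg hL.ne', if_neg (lt_irrefl L), block_apply, if_pos one_pos]; rfl)
    fun j hj i k => ?_
  have hpow : 2^(L-j) = 2 * 2^(L-(j+1)) := by rw [← pow_succ']; congr 1; omega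
  have hmem := levelFamily_mem L u hj k
  rw [hpow] at hmem
  refine blockSpan_le_span_levelFamily L u j.succ_pos hj ?_
  rw [pow_succ']
  exact block_mem_blockSpan_two_mul hmem i.isLt

end Levels

noncomputable def polyBlocks (N d : ℕ) : Submodule ℝ (ℕ → ℝ) :=
  (degreeLT ℝ (d+1)).map ((block N 0).comp (LinearMap.pi fun b : ℕ => leval (b : ℝ)))

instance (N d : ℕ) : FiniteDimensional ℝ (polyBlocks N d) := by
  unfold polyBlocks; infer_instance

theorem finrank_polyBlocks_le (N d : ℕ) : finrank ℝ (polyBlocks N d) ≤ d + 1 :=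
  (finrank_map_le _ _).trans_eq ((degreeLTEquiv ℝ (d+1)).finrank_eq.trans (finrank_fin_fun ℝ))

theorem block_mem_polyBlocks {N d s : ℕ} {u : ℕ → ℝ} {Q : ℝ[X]} (hQ : Q.natDegree ≤ d)
    (hu : ∀ b < N, u (s + b) = Q.eval ((s + b : ℕ) : ℝ)) :
    block N s u ∈ polyBlocks N d := by
  refine ⟨taylor (s : ℝ) Q, mem_degreeLT.2 ?_, ?_⟩
  · refine degree_le_natDegree.trans_lt ?_
    rw [natDegree_taylor]
    exact_mod_cast Nat.lt_succ_of_le hQ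
  · ext b
    by_cases hb : b < N
    · simp [block_apply, hb, hu, taylor_eval, add_comm]
    · simp [block_apply, hb]

section PiecewisePolynomial

variable {N K M : ℕ} {σ : ℕ → ℕ}

def jumpBlocks (N K : ℕ) (σ : ℕ → ℕ) : Finset (Fin K) :=
  Finset.univ.filter fun a => σ (a * N) ≠ σ (a * N + (N - 1))

theorem card_jumpBlocks_le (hσ : Monotone σ) (hσM : ∀ t, σ t ∈ Finset.Icc 1 M) :
    (jumpBlocks N K σ).card ≤ M - 1 := by
  have hjump : ∀ a ∈ jumpBlocks N K σ, σ (a * N) < σ (a * N + (N - 1)) := fun a ha =>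
    (hσ (Nat.le_add_right _ _)).lt_of_ne (Finset.mem_filter.1 ha).2
  have hmaps :
      Set.MapsTo (fun a : Fin K => σ (a * N)) (jumpBlocks N K σ) (Finset.Icc 1 (M - 1)) := by
    intro a ha
    have h1 := Finset.mem_Icc.1 (hσM (a * N))
    have h2 := Finset.mem_Icc.1 (hσM (a * N + (N - 1)))
    have h3 := hjump a ha
    simp only [Finset.coe_Icc, Set.mem_Icc]
    omega
  have hmono : StrictMonoOn (fun a : Fin K => σ (a * N)) (jumpBlocks N K σ) := by
    intro a ha a' _ haa'
    have : (a + 1) * N ≤ a' * N := Nat.mul_le_mul_right N haa'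
    exact (hjump a ha).trans_le (hσ (by rw [add_mul] at this; omega))
  simpa using Finset.card_le_card_of_injOn _ hmaps hmono.injOn

theorem block_mem_polyBlocks_of_notMem_jumpBlocks {d : ℕ} {u : ℕ → ℝ} {P : ℕ → ℝ[X]}
    (hσ : Monotone σ) (hdeg : ∀ t, (P (σ t)).natDegree ≤ d)
    (hu : ∀ t < K * N, u t = (P (σ t)).eval (t : ℝ)) {a : Fin K}
    (ha : a ∉ jumpBlocks N K σ) :
    block N (a * N) u ∈ polyBlocks N d := by
  have hconst : σ (a * N) = σ (a * N + (N - 1)) := by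
    simpa [jumpBlocks] using ha
  refine block_mem_polyBlocks (hdeg (a * N)) fun b hb => ?_
  have hσb : σ (a * N + b) = σ (a * N) :=
    le_antisymm (hconst.symm ▸ hσ (by omega)) (hσ (Nat.le_add_right _ _))
  have : (a + 1) * N ≤ K * N := Nat.mul_le_mul_right N a.isLt
  rw [hu _ (by rw [add_mul] at this; omega), hσb]

theorem finrank_blockSpan_le {d : ℕ} {u : ℕ → ℝ} {P : ℕ → ℝ[X]} (hσ : Monotone σ)
    (hσM : ∀ t, σ t ∈ Finset.Icc 1 M) (hdeg : ∀ t, (P (σ t)).natDegree ≤ d)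
    (hu : ∀ t < K * N, u t = (P (σ t)).eval (t : ℝ)) :
    finrank ℝ (blockSpan N K u) ≤ d + M := by
  classical
  set jumps :=
    span ℝ ((jumpBlocks N K σ).image fun a : Fin K => block N (a * N) u : Set (ℕ → ℝ))
  have hle : blockSpan N K u ≤ polyBlocks N d ⊔ jumps := by
    refine span_le.2 ?_
    rintro _ ⟨a, rfl⟩
    by_cases ha : a ∈ jumpBlocks N K σ
    · exact mem_sup_right (subset_span (Finset.mem_image_of_mem _ ha))
    · exact mem_sup_left (block_mem_polyBlocks_of_notMem_jumpBlocks hσ hdeg hu ha)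
  have hjumps : finrank ℝ jumps ≤ M - 1 :=
    (finrank_span_finset_le_card _).trans (Finset.card_image_le.trans (card_jumpBlocks_le hσ hσM))
  have hM : 1 ≤ M := (Finset.mem_Icc.1 (hσM 0)).1.trans (Finset.mem_Icc.1 (hσM 0)).2
  have hpoly := finrank_polyBlocks_le N d
  calc finrank ℝ (blockSpan N K u)
      ≤ finrank ℝ ↥(polyBlocks N d ⊔ jumps) := Submodule.finrank_mono hle
    _ ≤ finrank ℝ (polyBlocks N d) + finrank ℝ jumps := finrank_add_le_finrank_add_finrank _ _
    _ ≤ d + M := by omega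

end PiecewisePolynomial

theorem exists_monotone_pieceIndex {M : ℕ} (hM : 0 < M) {x : ℕ → ℝ} (hx0 : x 0 = 0)
    {u : ℝ → ℝ} {P : ℕ → ℝ[X]}
    (hu : ∀ m, 1 ≤ m → m ≤ M → ∀ t ∈ Ico (x (m-1)) (x m), u t = (P m).eval t)
    (huM : u (x M) = (P M).eval (x M)) :
    ∃ σ : ℝ → ℕ, Monotone σ ∧ (∀ t, σ t ∈ Finset.Icc 1 M) ∧
      ∀ t, 0 ≤ t → t ≤ x M → u t = (P (σ t)).eval t := by
  classical
  have hex : ∀ t : ℝ, ∃ m, 1 ≤ m ∧ (m = M ∨ t < x m) := fun _ => ⟨M, hM, Or.inl rfl⟩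
  have hle : ∀ t, Nat.find (hex t) ≤ M := fun t => Nat.find_le ⟨hM, Or.inl rfl⟩
  -- the piece of `t` is the first one whose right end point lies beyond `t`, or the last one
  refine ⟨fun t => Nat.find (hex t),
    fun s t hst => Nat.find_mono fun m ⟨h1, h⟩ => ⟨h1, h.imp_right hst.trans_lt⟩,
    fun t => Finset.mem_Icc.2 ⟨(Nat.find_spec (hex t)).1, hle t⟩, fun t ht0 htM => ?_⟩
  obtain ⟨hm1, hm⟩ := Nat.find_spec (hex t)
  have hlow : x (Nat.find (hex t) - 1) ≤ t := by
    rcases hm1.eq_or_lt with h1 | h1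
    · rwa [← h1, Nat.sub_self, hx0]
    · have hmin := Nat.find_min (hex t) (Nat.sub_lt (by omega) one_pos)
      push Not at hmin
      exact hmin (by omega) |>.2
  rcases hm with hmM | hlt
  · rcases htM.lt_or_eq with hlt | rfl
    · exact hu _ hm1 (hle t) t ⟨hlow, hmM.symm ▸ hlt⟩
    · simp only [hmM, huM]
  · exact hu _ hm1 (hle t) t ⟨hlow, hlt⟩

theorem stmt3_general (L M : ℕ) (hL : 0 < L) (hM : 0 < M) (p : ℕ → ℕ) (x : ℕ → ℝ)
    (hx0 : x 0 = 0) (hxM : x M = 2^L - 1)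
    (u : ℝ → ℝ) (P : ℕ → Polynomial ℝ)
    (hdeg : ∀ m, 1 ≤ m → m ≤ M → (P m).natDegree ≤ p m)
    (hu : ∀ m, 1 ≤ m → m ≤ M → ∀ t ∈ Ico (x (m-1)) (x m), u t = (P m).eval t)
    (huM : u (x M) = (P M).eval (x M)) :
    HasQTT L (fun i : Fin (2^L) => u ((i:ℕ) : ℝ)) ((Finset.Icc 1 M).sup p + M) := by
  obtain ⟨σ, hσ, hσM, hσu⟩ := exists_monotone_pieceIndex hM hx0 hu huM
  refine ⟨levelRank L (fun t : ℕ => u t), hasQTTRanks_levelRank L _ hL, fun j hj0 hjL => ?_⟩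
  rw [levelRank_of_pos_of_lt L _ hj0 hjL]
  have hdegσ : ∀ t, (P (σ t)).natDegree ≤ (Finset.Icc 1 M).sup p := fun t =>
    have hm := Finset.mem_Icc.1 (hσM t)
    (hdeg _ hm.1 hm.2).trans (Finset.le_sup (hσM t))
  refine finrank_blockSpan_le (σ := σ ∘ Nat.cast) (hσ.comp Nat.mono_cast) (fun t => hσM t)
    (fun t => hdegσ t) fun t ht => hσu t (Nat.cast_nonneg t) ?_
  rw [← pow_add, Nat.add_sub_cancel' hjL.le] at ht
  rw [hxM, le_sub_iff_add_le]
  exact_mod_cast ht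

/-- [Oseledets/Schwab, Lemma 3.7]: if `u` equals a polynomial `P_m` of
degree `p_m` on `[x_{m-1}, x_m)` for `1 ≤ m ≤ M`, where `0 = x₀ < … < x_M = 2^L - 1`, and
`u(x_M) = P_M(x_M)`, then the vector `(u(0),…,u(2^L-1))` admits a QTT decomposition with
ranks bounded by `P + M`, `P = max{p₁,…,p_M}`. -/
theorem stmt3 (L M : ℕ) (hL : 0 < L) (hM : 0 < M) (p : ℕ → ℕ) (x : ℕ → ℝ)
    (hx0 : x 0 = 0) (hxM : x M = 2^L - 1)
    (hmono : ∀ m < M, x m < x (m+1))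
    (u : ℝ → ℝ) (P : ℕ → Polynomial ℝ)
    (hdeg : ∀ m, 1 ≤ m → m ≤ M → (P m).natDegree ≤ p m)
    (hu : ∀ m, 1 ≤ m → m ≤ M → ∀ t ∈ Ico (x (m-1)) (x m), u t = (P m).eval t)
    (huM : u (x M) = (P M).eval (x M)) :
    HasQTT L (fun i : Fin (2^L) => u ((i:ℕ) : ℝ)) ((Finset.Icc 1 M).sup p + M) :=
  stmt3_general L M hL hM p x hx0 hxM u P hdeg hu huM
end

section
/- Let p, L ∈ ℕ and κ > 0, and let u be a continuous function on [0,1] that is a polynomial of degree at most p on each subinterval of the grid T^hp_κ = {0, min(1/4,κ), 1 − min(1/4,κ), 1} and satisfies u(0) = u(1) = 0. Then the L²(I)-orthogonal projection Π_L^{L²} u of u onto the space V^L₀ of continuous piecewise linear functions on the uniform grid T_L vanishing at 0 and 1 admits a QTT decomposition with respect to T_L^int with ranks bounded by 5(p + 9); in particular the ranks are bounded by C p with C independent of δ, L and p. -/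
open MeasureTheory Set Polynomial

/-! The nodal values `y k = w (k h)` of the `L²` projection satisfy, by testing with the hat
functions, the mass-matrix recurrence `y (k-1) + 4 y k + y (k+1) = (6/h) ∫ u φₖ`. Where the
support of `φₖ` lies in one polynomial piece of `u`, the right-hand side is a polynomial of
degree `≤ p` in `k` (integrate the Taylor expansion of the piece against the hat), so on the
nodes of each piece `y` is a polynomial of degree `≤ p` plus a combination of `(-2 ± √3)ᵏ`;
since `⌈t⌉ ≤ ⌊t⌋ + 1`, the three ranges of nodes cover all of them. Polynomials, geometric
sequences and step functions of the index have QTT ranks `p + 1`, `1` and `2`, ranks add under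
sums and multiply under products, and writing `y` as the first piece plus two jumps switched on
by step functions gives ranks `≤ (p + 3) + 2 (p + 3) + 2 (p + 3) = 5 (p + 3)`. -/

open Matrix Kronecker Polynomial

theorem Nat.sum_range_div_two_pow_mod_two_mul (i L : ℕ) :
    ∑ k ∈ Finset.range L, i / 2 ^ k % 2 * 2 ^ k = i % 2 ^ L := by
  induction L with
  | zero => simp [Nat.mod_one]
  | succ L ih => rw [Finset.sum_range_succ, ih, Nat.mod_pow_succ, mul_comm (2 ^ L)]

theorem sum_bits_mul_two_pow {L i : ℕ} (hi : i < 2 ^ L) :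
    ∑ j : Fin L, (bits L i j : ℕ) * 2 ^ (L - 1 - j) = i := by
  simp only [bits]
  rw [Fin.sum_univ_eq_sum_range (fun j => i / 2 ^ (L - 1 - j) % 2 * 2 ^ (L - 1 - j)),
    Finset.sum_range_reflect (fun k => i / 2 ^ k % 2 * 2 ^ k),
    Nat.sum_range_div_two_pow_mod_two_mul, Nat.mod_eq_of_lt hi]

section UniformQTT

variable {R : Type*} [CommRing R] {S T : Type*} [Fintype S] [DecidableEq S] [Fintype T]
  [DecidableEq T] {L : ℕ}

def ttProd (V : ℕ → Fin 2 → Matrix S S R) : (n : ℕ) → (Fin n → Fin 2) → Matrix S S R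
  | 0, _ => 1
  | n + 1, i => ttProd V n (fun j => i j.castSucc) * V n (i (Fin.last n))

/-- A QTT decomposition whose inner ranks are all indexed by the same type `S`, with the two
boundary cores split off as vectors `c` and `d`; this class of vectors is closed under sums
(`S ⊕ T`) and pointwise products (`S × T`). -/
def HasUniformQTT (L : ℕ) (S : Type*) [Fintype S] [DecidableEq S] (u : Fin (2 ^ L) → R) :
    Prop :=
  ∃ (c d : S → R) (V : ℕ → Fin 2 → Matrix S S R),
    ∀ i : Fin (2 ^ L), u i = c ⬝ᵥ ttProd V L (bits L i) *ᵥ d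

theorem ttProd_fromBlocks (V : ℕ → Fin 2 → Matrix S S R)
    (W : ℕ → Fin 2 → Matrix T T R) :
    ∀ n i, ttProd (fun j b => fromBlocks (V j b) 0 0 (W j b)) n i =
      fromBlocks (ttProd V n i) 0 0 (ttProd W n i)
  | 0, _ => fromBlocks_one.symm
  | n + 1, i => by simp [ttProd, ttProd_fromBlocks V W n, fromBlocks_multiply]

theorem ttProd_kronecker (V : ℕ → Fin 2 → Matrix S S R) (W : ℕ → Fin 2 → Matrix T T R) :
    ∀ n i, ttProd (fun j b => V j b ⊗ₖ W j b) n i = ttProd V n i ⊗ₖ ttProd W n i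
  | 0, _ => one_kronecker_one.symm
  | n + 1, i => by simp only [ttProd, ttProd_kronecker V W n, mul_kronecker_mul]

theorem ttProd_scalar (f : ℕ → Fin 2 → R) :
    ∀ n i, ttProd (fun j b => scalar S (f j b)) n i = scalar S (∏ j : Fin n, f j (i j))
  | 0, _ => by simp [ttProd]
  | n + 1, i => by rw [ttProd, ttProd_scalar f n, Fin.prod_univ_castSucc, map_mul]; rfl

namespace HasUniformQTT

theorem add {u v : Fin (2 ^ L) → R} (hu : HasUniformQTT L S u) (hv : HasUniformQTT L T v) :
    HasUniformQTT L (S ⊕ T) (u + v) := by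
  obtain ⟨c, d, V, hV⟩ := hu
  obtain ⟨c', d', W, hW⟩ := hv
  refine ⟨Sum.elim c c', Sum.elim d d', fun j b => fromBlocks (V j b) 0 0 (W j b), fun i => ?_⟩
  simp [ttProd_fromBlocks, fromBlocks_mulVec, sumElim_dotProduct_sumElim, hV i, hW i]

theorem mul {u v : Fin (2 ^ L) → R} (hu : HasUniformQTT L S u) (hv : HasUniformQTT L T v) :
    HasUniformQTT L (S × T) (u * v) := by
  obtain ⟨c, d, V, hV⟩ := hu
  obtain ⟨c', d', W, hW⟩ := hv
  refine ⟨fun p => c p.1 * c' p.2, fun p => d p.1 * d' p.2, fun j b => V j b ⊗ₖ W j b,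
    fun i => ?_⟩
  have hmulVec (A : Matrix S S R) (B : Matrix T T R) :
      (A ⊗ₖ B) *ᵥ (fun p => d p.1 * d' p.2) = fun p => (A *ᵥ d) p.1 * (B *ᵥ d') p.2 := by
    ext p
    simp [mulVec, dotProduct, Fintype.sum_prod_type, Finset.sum_mul_sum, mul_mul_mul_comm]
  have hdot (e : S → R) (e' : T → R) :
      (fun p : S × T => c p.1 * c' p.2) ⬝ᵥ (fun p => e p.1 * e' p.2) =
        (c ⬝ᵥ e) * (c' ⬝ᵥ e') := by
    simp [dotProduct, Fintype.sum_prod_type, Finset.sum_mul_sum, mul_mul_mul_comm]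
  rw [Pi.mul_apply, hV i, hW i, ttProd_kronecker, hmulVec, hdot]

theorem const_mul {u : Fin (2 ^ L) → R} (a : R) (hu : HasUniformQTT L S u) :
    HasUniformQTT L S (fun i => a * u i) := by
  obtain ⟨c, d, V, hV⟩ := hu
  exact ⟨a • c, d, V, fun i => by rw [smul_dotProduct, smul_eq_mul, ← hV i]⟩

theorem congr {u v : Fin (2 ^ L) → R} (h : HasUniformQTT L S u) (huv : ∀ i, u i = v i) :
    HasUniformQTT L S v :=
  funext huv ▸ h

end HasUniformQTT

theorem hasUniformQTT_pow (x : R) : HasUniformQTT L (Fin 1) (fun i => x ^ (i : ℕ)) := by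
  refine ⟨fun _ => 1, fun _ => 1, fun j b => scalar (Fin 1) (x ^ ((b : ℕ) * 2 ^ (L - 1 - j))),
    fun i => ?_⟩
  rw [ttProd_scalar, Finset.prod_pow_eq_pow_sum, sum_bits_mul_two_pow i.2]
  simp [dotProduct]

def powersVec (D : ℕ) (x : R) : Fin (D + 1) → R := fun k => x ^ (k : ℕ)

/-- The matrix of the substitution `X ↦ X + a` on polynomials of degree `≤ D`. -/
def binomialShift (D : ℕ) (a : R) : Matrix (Fin (D + 1)) (Fin (D + 1)) R :=
  of fun k l => ((l : ℕ).choose k : R) * a ^ ((l : ℕ) - k)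

theorem vecMul_powersVec_binomialShift (D : ℕ) (x a : R) :
    vecMul (powersVec D x) (binomialShift D a) = powersVec D (x + a) := by
  funext l
  have hl : (l : ℕ) + 1 ≤ D + 1 := l.2
  simp only [vecMul, dotProduct, powersVec, binomialShift, of_apply]
  rw [add_pow, Fin.sum_univ_eq_sum_range
    (fun k => x ^ k * (((l : ℕ).choose k : R) * a ^ ((l : ℕ) - k)))]
  refine (Finset.sum_subset (Finset.range_subset_range.2 hl) fun k _ hk => ?_).symm.trans
    (Finset.sum_congr rfl fun k _ => by ring)
  simp [Nat.choose_eq_zero_of_lt (by simpa using hk : (l : ℕ) < k)]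

theorem vecMul_ttProd_binomialShift (D : ℕ) (f : ℕ → Fin 2 → R) (x : R) :
    ∀ n i, vecMul (powersVec D x) (ttProd (fun j b => binomialShift D (f j b)) n i) =
      powersVec D (x + ∑ j : Fin n, f j (i j))
  | 0, _ => by simp [ttProd]
  | n + 1, i => by
    rw [ttProd, ← vecMul_vecMul, vecMul_ttProd_binomialShift D f x n,
      vecMul_powersVec_binomialShift, Fin.sum_univ_castSucc, add_assoc]
    rfl

theorem hasUniformQTT_polynomial {P : R[X]} {D : ℕ} (hP : P.natDegree ≤ D) :
    HasUniformQTT L (Fin (D + 1)) (fun i => P.eval ((i : ℕ) : R)) := by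
  refine ⟨powersVec D 0, fun k => P.coeff k,
    fun j b => binomialShift D (((b : ℕ) * 2 ^ (L - 1 - j) : ℕ) : R), fun i => ?_⟩
  show P.eval _ = _
  rw [dotProduct_mulVec, vecMul_ttProd_binomialShift, ← Nat.cast_sum, sum_bits_mul_two_pow i.2,
    zero_add, eval_eq_sum_range' (Nat.lt_succ_of_le hP), dotProduct,
    ← Fin.sum_univ_eq_sum_range (fun k => P.coeff k * ((i : ℕ) : R) ^ k)]
  exact Finset.sum_congr rfl fun k _ => mul_comm _ _

end UniformQTT

theorem Nat.div_two_pow_sub_succ (x : ℕ) {L n : ℕ} (hn : n < L) :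
    x / 2 ^ (L - (n + 1)) = 2 * (x / 2 ^ (L - n)) + x / 2 ^ (L - 1 - n) % 2 := by
  rw [show L - (n + 1) = L - 1 - n by omega, show L - n = L - 1 - n + 1 by omega, pow_succ,
    ← Nat.div_div_eq_div_mul]
  omega

section Comparator

variable {R : Type*} [CommRing R] {L : ℕ}

/-- Cores of the automaton that reads the binary digits of `i` from the most significant one and
records whether the digits read so far are equal to those of `N` (first state) or already
exceed them (second state). -/
def comparatorCore (L N j : ℕ) (b : Fin 2) : Matrix (Fin 2) (Fin 2) R :=
  !![if (b : ℕ) = N / 2 ^ (L - 1 - j) % 2 then 1 else 0,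
     if N / 2 ^ (L - 1 - j) % 2 < b then 1 else 0; 0, 1]

-- `x / 2 ^ (L - n)` is the number formed by the leading `n` of the `L` binary digits of `x`
theorem vecMul_ttProd_comparatorCore {N i : ℕ} (hN : N < 2 ^ L) (hi : i < 2 ^ L) :
    ∀ n (hn : n ≤ L),
      vecMul ![1, 0] (ttProd (comparatorCore (R := R) L N) n fun j => bits L i (j.castLE hn)) =
        ![if i / 2 ^ (L - n) = N / 2 ^ (L - n) then 1 else 0,
          if N / 2 ^ (L - n) < i / 2 ^ (L - n) then 1 else 0]
  | 0, _ => by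
    rw [Nat.sub_zero, Nat.div_eq_of_lt hi, Nat.div_eq_of_lt hN]
    simp [ttProd]
  | n + 1, hn => by
    have ih := vecMul_ttProd_comparatorCore hN hi n (by omega)
    rw [ttProd, ← vecMul_vecMul]
    erw [ih]
    rw [Nat.div_two_pow_sub_succ i hn, Nat.div_two_pow_sub_succ N hn]
    have hbit : (bits L i (Fin.castLE hn (Fin.last n)) : ℕ) = i / 2 ^ (L - 1 - n) % 2 := rfl
    ext t
    fin_cases t <;>
      simp only [comparatorCore, vecMul, dotProduct, Fin.sum_univ_two, hbit, of_apply,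
        cons_val', cons_val_zero, cons_val_one, empty_val', cons_val_fin_one] <;>
      split_ifs <;> simp <;> omega

theorem hasUniformQTT_indicator_le (N : ℕ) :
    HasUniformQTT L (Fin 2) (fun i => if N ≤ (i : ℕ) then (1 : R) else 0) := by
  by_cases hN : N < 2 ^ L
  · refine ⟨![1, 0], ![1, 1], comparatorCore L N, fun i => ?_⟩
    have h : vecMul ![1, 0] (ttProd (comparatorCore (R := R) L N) L (bits L i)) =
        ![if (i : ℕ) = N then 1 else 0, if N < (i : ℕ) then 1 else 0] := by
      simpa using vecMul_ttProd_comparatorCore (R := R) hN i.2 L le_rfl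
    show (if N ≤ (i : ℕ) then (1 : R) else 0) = _
    rw [dotProduct_mulVec, h]
    simp only [dotProduct, Fin.sum_univ_two, cons_val_zero, cons_val_one]
    split_ifs <;> simp <;> omega
  · exact ⟨0, 0, fun _ _ => 1, fun i => by simp [show ¬ N ≤ (i : ℕ) by omega]⟩

theorem HasUniformQTT.add_indicator {S T : Type*} [Fintype S] [DecidableEq S] [Fintype T]
    [DecidableEq T] {u v : Fin (2 ^ L) → R} (N : ℕ) (hu : HasUniformQTT L S u)
    (hv : HasUniformQTT L T v) :
    HasUniformQTT L (S ⊕ Fin 2 × T) (fun i => u i + if N ≤ (i : ℕ) then v i else 0) :=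
  (hu.add ((hasUniformQTT_indicator_le N).mul hv)).congr fun i => by
    simp only [Pi.add_apply, Pi.mul_apply]
    split_ifs <;> simp

end Comparator

theorem HasUniformQTT.hasQTT {L : ℕ} {S : Type*} [Fintype S] [DecidableEq S] [Nonempty S]
    {u : Fin (2 ^ L) → ℝ} (hL : 0 < L) (h : HasUniformQTT L S u) {r : ℕ}
    (hr : Fintype.card S ≤ r) : HasQTT L u r := by
  obtain ⟨c, d, V, hV⟩ := h
  set k := Fintype.card S
  let e : Fin k ≃ S := (Fintype.equivFin S).symm
  -- an index `x : Fin (rk j)` of an inner rank stands for `e (x mod k) : S`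
  let ι (x : ℕ) : S := e ⟨x % k, Nat.mod_lt _ Fintype.card_pos⟩
  let rk (j : ℕ) : ℕ := if j = 0 ∨ j = L then 1 else k
  let left (j x : ℕ) : S → ℝ := if j = 0 then c else Pi.single (ι x) 1
  let right (j x : ℕ) : S → ℝ := if j = L then d else Pi.single (ι x) 1
  let W (j : ℕ) (b : Fin 2) : Matrix (Fin (rk j)) (Fin (rk (j + 1))) ℝ :=
    of fun x y => left j x ⬝ᵥ V j b *ᵥ right (j + 1) y
  have hsum (n : ℕ) (hn : rk n = k) (F : S → ℝ) :
      ∑ x : Fin (rk n), F (ι x) = ∑ s, F s := by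
    refine Fintype.sum_equiv ((finCongr hn).trans e) _ _ fun x => congrArg F (congrArg e ?_)
    ext
    simp [Nat.mod_eq_of_lt (hn ▸ x.2 : (x : ℕ) < k)]
  have key : ∀ n, 1 ≤ n → n ≤ L →
      ∀ (ib : Fin n → Fin 2) (a : Fin (rk 0)) (y : Fin (rk n)),
        qttEntry W n ib a y = c ⬝ᵥ ttProd V n ib *ᵥ right n y := by
    intro n hn1 hnL ib a y
    induction n with
    | zero => omega
    | succ n ih =>
      rcases Nat.eq_zero_or_pos n with rfl | hn
      · simp [qttEntry, ttProd, W, left, Fin.fin_one_eq_zero a]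
      · have hmid : rk n = k := if_neg (by omega)
        rw [qttEntry, mul_apply, ttProd, ← mulVec_mulVec, dotProduct_mulVec, dotProduct,
          ← hsum n hmid]
        refine Finset.sum_congr rfl fun x _ => ?_
        rw [ih (by omega) (by omega)]
        simp only [W, left, right, of_apply, if_neg (show n ≠ 0 by omega),
          if_neg (show n ≠ L by omega), mulVec_single_one, single_one_dotProduct]
        rfl
  refine ⟨rk, ⟨by simp [rk], by simp [rk], W, fun i a b => ?_⟩,
    fun j hj0 hjL => by simpa [rk, hj0.ne', hjL.ne] using hr⟩
  rw [key L hL le_rfl, hV i]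
  simp [right]

section MassStencil

/-- The row `(1, 4, 1)` of the P1 mass matrix on a uniform grid, scaled by `6 / h`. -/
def massStencil (y : ℕ → ℝ) (m : ℕ) : ℝ := y m + 4 * y (m + 1) + y (m + 2)

noncomputable def massStencilPoly : ℝ[X] →ₗ[ℝ] ℝ[X] :=
  LinearMap.id + (4 : ℝ) • taylor 1 + taylor 2

theorem eval_massStencilPoly (S : ℝ[X]) (x : ℝ) :
    (massStencilPoly S).eval x = S.eval x + 4 * S.eval (x + 1) + S.eval (x + 2) := by
  simp [massStencilPoly, taylor_eval]

theorem massStencilPoly_eq_zero {S : ℝ[X]} (h : massStencilPoly S = 0) : S = 0 := by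
  have h6 : (massStencilPoly S).coeff S.natDegree = 6 * S.leadingCoeff := by
    simp only [massStencilPoly, LinearMap.add_apply, LinearMap.smul_apply, LinearMap.id_apply,
      coeff_add, coeff_smul, coeff_taylor_natDegree, coeff_natDegree]
    ring
  rw [h, coeff_zero] at h6
  exact leadingCoeff_eq_zero.1 (by linarith)

theorem exists_massStencilPoly_eq (G : ℝ[X]) :
    ∃ S : ℝ[X], S.natDegree ≤ G.natDegree ∧ massStencilPoly S = G := by
  have hmaps : ∀ S ∈ degreeLT ℝ (G.natDegree + 1),
      massStencilPoly S ∈ degreeLT ℝ (G.natDegree + 1) := fun S hS => by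
    simp only [massStencilPoly, LinearMap.add_apply, LinearMap.smul_apply, LinearMap.id_apply]
    exact add_mem (add_mem hS (Submodule.smul_mem _ _ (taylor_mem_degreeLT.2 hS)))
      (taylor_mem_degreeLT.2 hS)
  have hinj : Function.Injective (massStencilPoly.restrict hmaps) :=
    (injective_iff_map_eq_zero _).2 fun S hS =>
      Subtype.ext (massStencilPoly_eq_zero (congrArg Subtype.val hS))
  obtain ⟨S, hS⟩ := LinearMap.injective_iff_surjective.1 hinj
    ⟨G, mem_degreeLT.2 <|
      degree_le_natDegree.trans_lt (by exact_mod_cast G.natDegree.lt_succ_self)⟩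
  exact ⟨S, natDegree_le_of_degree_le (Order.le_of_lt_succ (mem_degreeLT.1 S.2)),
    congrArg Subtype.val hS⟩

theorem eqOn_of_massStencil_eq {y z : ℕ → ℝ} {A B : ℕ}
    (h : ∀ m, A ≤ m → m + 2 ≤ B → massStencil y m = massStencil z m)
    (h₀ : y A = z A) (h₁ : y (A + 1) = z (A + 1)) :
    ∀ m, A ≤ m → m ≤ B → y m = z m := by
  suffices ∀ k, A + k ≤ B →
      y (A + k) = z (A + k) ∧ (A + k + 1 ≤ B → y (A + k + 1) = z (A + k + 1)) by
    intro m hAm hmB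
    simpa [Nat.add_sub_cancel' hAm] using (this (m - A) (by omega)).1
  intro k
  induction k with
  | zero => exact fun _ => ⟨h₀, fun _ => h₁⟩
  | succ k ih =>
    intro hk
    obtain ⟨hk₀, hk₁⟩ := ih (by omega)
    refine ⟨hk₁ (by omega), fun hk2 => ?_⟩
    have := h (A + k) (by omega) (by omega)
    simp only [massStencil, hk₀, hk₁ (by omega)] at this
    rw [show A + (k + 1) + 1 = A + k + 2 by omega]
    linarith

/-- `-2 ± √3` are the roots of `λ² + 4λ + 1`, so the geometric parts solve the homogeneous
mass-stencil recurrence. -/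
noncomputable def stencilSol (S : ℝ[X]) (α β : ℝ) (m : ℕ) : ℝ :=
  S.eval (m : ℝ) + α * (-2 + √3) ^ m + β * (-2 - √3) ^ m

theorem massStencil_stencilSol (S : ℝ[X]) (α β : ℝ) (m : ℕ) :
    massStencil (stencilSol S α β) m = S.eval (m : ℝ) + 4 * S.eval ((m : ℝ) + 1) +
      S.eval ((m : ℝ) + 2) := by
  have h3 : √3 ^ 2 = 3 := Real.sq_sqrt (by norm_num)
  simp only [massStencil, stencilSol]
  push_cast
  linear_combination (α * (-2 + √3) ^ m + β * (-2 - √3) ^ m) * h3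

theorem stencilSol_sub (S S' : ℝ[X]) (α β α' β' : ℝ) (m : ℕ) :
    stencilSol (S - S') (α - α') (β - β') m =
      stencilSol S α β m - stencilSol S' α' β' m := by
  simp only [stencilSol, eval_sub]
  ring

theorem exists_stencilSol_eq_and_succ_eq (S : ℝ[X]) (A : ℕ) (z₀ z₁ : ℝ) :
    ∃ α β, stencilSol S α β A = z₀ ∧ stencilSol S α β (A + 1) = z₁ := by
  have h3 : √3 ^ 2 = 3 := Real.sq_sqrt (by norm_num)
  have hs : 0 < √3 := by positivity
  have hp : (-2 + √3) ^ A ≠ 0 := pow_ne_zero _ (by nlinarith)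
  have hq : (-2 - √3) ^ A ≠ 0 := pow_ne_zero _ (by nlinarith)
  set w₀ := z₀ - S.eval (A : ℝ)
  set w₁ := z₁ - S.eval ((A + 1 : ℕ) : ℝ)
  refine ⟨(w₁ - (-2 - √3) * w₀) / ((-2 + √3) ^ A * (2 * √3)),
    ((-2 + √3) * w₀ - w₁) / ((-2 - √3) ^ A * (2 * √3)), ?_, ?_⟩ <;>
  · simp only [stencilSol, pow_succ]
    field_simp
    simp only [w₀, w₁]
    ring

end MassStencil

section PiecewiseSolutions

variable {L : ℕ}

theorem exists_stencilSol_eqOn {y : ℕ → ℝ} {G : ℝ[X]} {A B : ℕ}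
    (h : ∀ m, A ≤ m → m + 2 ≤ B → massStencil y m = G.eval (m : ℝ)) :
    ∃ S α β, S.natDegree ≤ G.natDegree ∧
      ∀ m, A ≤ m → m ≤ B → y m = stencilSol S α β m := by
  obtain ⟨S, hSG, hS⟩ := exists_massStencilPoly_eq G
  obtain ⟨α, β, h₀, h₁⟩ := exists_stencilSol_eq_and_succ_eq S A (y A) (y (A + 1))
  refine ⟨S, α, β, hSG, eqOn_of_massStencil_eq (fun m hAm hmB => ?_) h₀.symm h₁.symm⟩
  rw [h m hAm hmB, massStencil_stencilSol, ← eval_massStencilPoly, hS]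

theorem hasUniformQTT_stencilSol {S : ℝ[X]} {D : ℕ} (hS : S.natDegree ≤ D) (α β : ℝ) :
    HasUniformQTT L (Fin (D + 1) ⊕ Fin 1 ⊕ Fin 1) (fun i => stencilSol S α β (i + 1)) := by
  refine ((hasUniformQTT_polynomial (P := taylor 1 S) (by rwa [natDegree_taylor])).add
    (((hasUniformQTT_pow (-2 + √3)).const_mul (α * (-2 + √3))).add
      ((hasUniformQTT_pow (-2 - √3)).const_mul (β * (-2 - √3))))).congr fun i => ?_
  simp only [stencilSol, Pi.add_apply, taylor_eval, pow_succ]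
  push_cast
  ring

theorem hasQTT_of_massStencil_eq_polynomial (hL : 0 < L) {y : ℕ → ℝ} {D : ℕ}
    {G₁ G₂ G₃ : ℝ[X]} (hG₁ : G₁.natDegree ≤ D) (hG₂ : G₂.natDegree ≤ D)
    (hG₃ : G₃.natDegree ≤ D) {a₀ a₁ b₀ b₁ : ℕ} (ha : a₁ ≤ a₀ + 1)
    (hb : b₁ ≤ b₀ + 1) (hab : a₁ ≤ b₁)
    (h₁ : ∀ m, m + 2 ≤ a₀ → massStencil y m = G₁.eval (m : ℝ))
    (h₂ : ∀ m, a₁ ≤ m → m + 2 ≤ b₀ → massStencil y m = G₂.eval (m : ℝ))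
    (h₃ : ∀ m, b₁ ≤ m → m + 2 ≤ 2 ^ L + 1 → massStencil y m = G₃.eval (m : ℝ))
    {r : ℕ} (hr : 5 * (D + 3) ≤ r) : HasQTT L (fun i : Fin (2 ^ L) => y (i + 1)) r := by
  obtain ⟨S₁, α₁, β₁, hS₁, hy₁⟩ := exists_stencilSol_eqOn (A := 0) fun m _ => h₁ m
  obtain ⟨S₂, α₂, β₂, hS₂, hy₂⟩ := exists_stencilSol_eqOn h₂
  obtain ⟨S₃, α₃, β₃, hS₃, hy₃⟩ := exists_stencilSol_eqOn h₃
  replace hS₁ := hS₁.trans hG₁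
  replace hS₂ := hS₂.trans hG₂
  replace hS₃ := hS₃.trans hG₃
  have hsub {S S' : ℝ[X]} (h : S.natDegree ≤ D) (h' : S'.natDegree ≤ D) :
      (S - S').natDegree ≤ D :=
    (natDegree_sub_le _ _).trans (max_le h h')
  -- `y` is the first piece, plus the jump to the second piece from node `a₁` on, plus the jump
  -- to the third piece from node `b₁` on
  have hQTT := ((hasUniformQTT_stencilSol (L := L) hS₁ α₁ β₁).add_indicator (a₁ - 1)
    (hasUniformQTT_stencilSol (hsub hS₂ hS₁) (α₂ - α₁) (β₂ - β₁))).add_indicator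
      (b₁ - 1) (hasUniformQTT_stencilSol (hsub hS₃ hS₂) (α₃ - α₂) (β₃ - β₂))
  refine (hQTT.congr fun i => ?_).hasQTT hL (by simp; omega)
  have hi : (i : ℕ) < 2 ^ L := i.2
  simp only [stencilSol_sub]
  split_ifs with hA hB hB
  · rw [hy₃ _ (by omega) (by omega)]; ring
  · rw [hy₂ _ (by omega) (by omega)]; ring
  · omega
  · rw [hy₁ _ (by omega) (by omega)]; ring

end PiecewiseSolutions

section Integrals

/-- Taylor's formula `P(s + t) = ∑ₙ (hasseDeriv n P)(s) tⁿ`, integrated against `K` on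
`[a, b]`. -/
noncomputable def momentPoly (K : ℝ → ℝ) (a b : ℝ) (P : ℝ[X]) : ℝ[X] :=
  ∑ n ∈ Finset.range (P.natDegree + 1), C (∫ t in a..b, t ^ n * K t) * hasseDeriv n P

theorem natDegree_momentPoly_le (K : ℝ → ℝ) (a b : ℝ) (P : ℝ[X]) :
    (momentPoly K a b P).natDegree ≤ P.natDegree :=
  natDegree_sum_le_of_forall_le _ _ fun n _ =>
    (natDegree_C_mul_le _ _).trans ((natDegree_hasseDeriv_le P n).trans (Nat.sub_le _ _))

theorem eval_momentPoly {K : ℝ → ℝ} {a b : ℝ} (hK : IntervalIntegrable K volume a b)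
    (P : ℝ[X]) (s : ℝ) :
    (momentPoly K a b P).eval s = ∫ t in a..b, P.eval (s + t) * K t := by
  have htaylor (t : ℝ) : P.eval (s + t) * K t =
      ∑ n ∈ Finset.range (P.natDegree + 1), (hasseDeriv n P).eval s * (t ^ n * K t) := by
    rw [add_comm, ← taylor_eval,
      eval_eq_sum_range' (n := P.natDegree + 1) (by rw [natDegree_taylor]; omega), Finset.sum_mul]
    simp only [taylor_coeff, mul_assoc]
  simp only [htaylor, momentPoly, eval_finsetSum, eval_mul, eval_C]
  rw [intervalIntegral.integral_finsetSum fun n _ =>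
    (hK.continuousOn_mul (continuous_pow n).continuousOn).const_mul _]
  refine Finset.sum_congr rfl fun n _ => ?_
  rw [intervalIntegral.integral_const_mul, mul_comm]

theorem integral_affine_mul_affine (p q r s a b : ℝ) :
    ∫ x in a..b, (p * x + q) * (r * x + s) =
      (b - a) / 6 * (2 * ((p * a + q) * (r * a + s)) + (p * a + q) * (r * b + s) +
        (p * b + q) * (r * a + s) + 2 * ((p * b + q) * (r * b + s))) := by
  have hderiv (x : ℝ) : HasDerivAt (fun x => p * r / 3 * x ^ 3 + (p * s + q * r) / 2 * x ^ 2 +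
      q * s * x) ((p * x + q) * (r * x + s)) x :=
    ((((hasDerivAt_pow 3 x).const_mul (p * r / 3)).add
      ((hasDerivAt_pow 2 x).const_mul ((p * s + q * r) / 2))).add
        ((hasDerivAt_id' x).const_mul (q * s))).congr_deriv (by push_cast; ring)
  rw [intervalIntegral.integral_eq_sub_of_hasDerivAt (fun x _ => hderiv x)
    ((by fun_prop : Continuous fun x => (p * x + q) * (r * x + s)).intervalIntegrable a b)]
  ring

end Integrals

section HatFunctions

variable {L : ℕ}

theorem gridh_pos (L : ℕ) : 0 < gridh L := by
  unfold gridh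
  positivity

theorem natCast_mul_gridh_le_one {k : ℕ} (hk : k ≤ 2 ^ L + 1) : (k : ℝ) * gridh L ≤ 1 := by
  have hk' : (k : ℝ) ≤ 2 ^ L + 1 := by exact_mod_cast hk
  rw [gridh, mul_one_div, div_le_one (by positivity)]
  exact hk'

theorem one_div_gridh (L : ℕ) : 1 / gridh L = ((2 ^ L + 1 : ℕ) : ℝ) := by
  simp [gridh]

noncomputable def tent (h t : ℝ) : ℝ := max 0 (1 - |t| / h)

theorem hat_eq_tent (L m : ℕ) (x : ℝ) : hat L m x = tent (gridh L) (x - m * gridh L) := rfl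

theorem continuous_tent (h : ℝ) : Continuous (tent h) := by
  unfold tent
  fun_prop

theorem continuous_hat (L m : ℕ) : Continuous (hat L m) :=
  (continuous_tent _).comp (by fun_prop)

theorem tent_eq_zero {h t : ℝ} (hh : 0 < h) (ht : h ≤ |t|) : tent h t = 0 :=
  max_eq_left (by rw [sub_nonpos, le_div_iff₀ hh]; linarith)

theorem tent_of_nonpos {h t : ℝ} (hh : 0 < h) (h₁ : -h ≤ t) (h₂ : t ≤ 0) :
    tent h t = t / h + 1 := by
  rw [tent, abs_of_nonpos h₂, max_eq_right]
  · ring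
  · rw [sub_nonneg, div_le_one hh]; linarith

theorem tent_of_nonneg {h t : ℝ} (hh : 0 < h) (h₁ : 0 ≤ t) (h₂ : t ≤ h) :
    tent h t = -t / h + 1 := by
  rw [tent, abs_of_nonneg h₁, max_eq_right]
  · ring
  · rw [sub_nonneg, div_le_one hh]; linarith

theorem hat_succ_eq_zero {m : ℕ} {x : ℝ} (hx : x ∉ Ioo (m * gridh L) ((m + 2) * gridh L)) :
    hat L (m + 1) x = 0 := by
  rw [hat_eq_tent, tent_eq_zero (gridh_pos L)]
  push_cast
  simp only [mem_Ioo, not_and_or, not_lt] at hx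
  rcases hx with hx | hx
  · rw [abs_of_nonpos (by nlinarith [gridh_pos L])]; linarith
  · rw [abs_of_nonneg (by nlinarith [gridh_pos L])]; linarith

theorem hat_succ_of_mem_left {m : ℕ} {x : ℝ}
    (hx : x ∈ Icc (m * gridh L) ((m + 1) * gridh L)) :
    hat L (m + 1) x = 1 / gridh L * x + -m := by
  have hh := gridh_pos L
  rw [hat_eq_tent, tent_of_nonpos hh (by push_cast; nlinarith [hx.1])
    (by push_cast; nlinarith [hx.2])]
  field_simp
  push_cast
  ring

theorem hat_succ_of_mem_right {m : ℕ} {x : ℝ}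
    (hx : x ∈ Icc ((m + 1) * gridh L) ((m + 2) * gridh L)) :
    hat L (m + 1) x = -1 / gridh L * x + (m + 2) := by
  have hh := gridh_pos L
  rw [hat_eq_tent, tent_of_nonneg hh (by push_cast; nlinarith [hx.1])
    (by push_cast; nlinarith [hx.2])]
  field_simp
  push_cast
  ring

theorem hat_succ_mem_PL0 {m : ℕ} (hm : m + 1 ≤ 2 ^ L) : PL0 L (hat L (m + 1)) := by
  have hh := gridh_pos L
  refine ⟨⟨(continuous_hat L _).continuousOn, fun j _ => ?_⟩, hat_succ_eq_zero ?_,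
    hat_succ_eq_zero ?_⟩
  · obtain hj | rfl | rfl | hj : j + 1 ≤ m ∨ j = m ∨ j = m + 1 ∨ m + 2 ≤ j := by omega
    · have hj' : (j : ℝ) + 1 ≤ m := by exact_mod_cast hj
      exact ⟨0, 0, fun x hx => by
        rw [hat_succ_eq_zero fun h' => by nlinarith [hx.2, h'.1]]; ring⟩
    · exact ⟨_, _, fun x hx => hat_succ_of_mem_left hx⟩
    · refine ⟨_, _, fun x hx => hat_succ_of_mem_right ⟨?_, ?_⟩⟩ <;> push_cast at hx <;>
        linarith [hx.1, hx.2]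
    · have hj' : (m : ℝ) + 2 ≤ j := by exact_mod_cast hj
      exact ⟨0, 0, fun x hx => by
        rw [hat_succ_eq_zero fun h' => by nlinarith [hx.1, h'.2]]; ring⟩
  · exact fun h' => by nlinarith [h'.1]
  · have h₁ := natCast_mul_gridh_le_one (L := L) (k := m + 2) (by omega)
    push_cast at h₁
    exact fun h' => by linarith [h'.2]

theorem setIntegral_mul_hat {m : ℕ} (hm : m + 1 ≤ 2 ^ L) (f : ℝ → ℝ) :
    ∫ x in Ioo (0 : ℝ) 1, f x * hat L (m + 1) x =
      ∫ x in (m * gridh L)..((m + 2) * gridh L), f x * hat L (m + 1) x := by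
  have hh := gridh_pos L
  have h₁ := natCast_mul_gridh_le_one (L := L) (k := m + 2) (by omega)
  push_cast at h₁
  rw [intervalIntegral.integral_of_le (by nlinarith), integral_Ioc_eq_integral_Ioo]
  exact setIntegral_eq_of_subset_of_forall_sdiff_eq_zero measurableSet_Ioo
    (Ioo_subset_Ioo (by positivity) h₁) fun x hx => by rw [hat_succ_eq_zero hx.2, mul_zero]

end HatFunctions

section L2Projection

variable {L : ℕ}

theorem integral_affine_mul_hat_left {m : ℕ} {w : ℝ → ℝ} {a b : ℝ}
    (hw : ∀ x ∈ Icc (m * gridh L) ((m + 1) * gridh L), w x = a * x + b) :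
    ∫ x in (m * gridh L)..((m + 1) * gridh L), w x * hat L (m + 1) x =
      gridh L / 6 * (w (m * gridh L) + 2 * w ((m + 1) * gridh L)) := by
  have hh := gridh_pos L
  have hcell : m * gridh L ≤ (m + 1) * gridh L := by nlinarith
  rw [intervalIntegral.integral_congr (g := fun x => (a * x + b) * (1 / gridh L * x + -m))
    fun x hx => by
      rw [uIcc_of_le hcell] at hx
      simp only [hw x hx, hat_succ_of_mem_left hx],
    integral_affine_mul_affine, hw _ ⟨le_rfl, hcell⟩, hw _ ⟨hcell, le_rfl⟩]
  field_simp
  ring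

theorem integral_affine_mul_hat_right {m : ℕ} {w : ℝ → ℝ} {a b : ℝ}
    (hw : ∀ x ∈ Icc ((m + 1) * gridh L) ((m + 2) * gridh L), w x = a * x + b) :
    ∫ x in ((m + 1) * gridh L)..((m + 2) * gridh L), w x * hat L (m + 1) x =
      gridh L / 6 * (2 * w ((m + 1) * gridh L) + w ((m + 2) * gridh L)) := by
  have hh := gridh_pos L
  have hcell : (m + 1) * gridh L ≤ (m + 2) * gridh L := by nlinarith
  rw [intervalIntegral.integral_congr (g := fun x => (a * x + b) * (-1 / gridh L * x + (m + 2)))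
    fun x hx => by
      rw [uIcc_of_le hcell] at hx
      simp only [hw x hx, hat_succ_of_mem_right hx],
    integral_affine_mul_affine, hw _ ⟨le_rfl, hcell⟩, hw _ ⟨hcell, le_rfl⟩]
  field_simp
  ring

theorem integral_mul_hat_of_PL {w : ℝ → ℝ} (hw : PL L w) {m : ℕ} (hm : m + 1 ≤ 2 ^ L) :
    ∫ x in Ioo (0 : ℝ) 1, w x * hat L (m + 1) x =
      gridh L / 6 * massStencil (fun k => w (k * gridh L)) m := by
  have hh := gridh_pos L
  have h₁ : ((m + 2 : ℕ) : ℝ) * gridh L ≤ 1 := natCast_mul_gridh_le_one (by omega)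
  push_cast at h₁
  obtain ⟨a₁, b₁, hw₁⟩ := hw.2 m (by omega)
  obtain ⟨a₂, b₂, hw₂⟩ := hw.2 (m + 1) (by omega)
  push_cast at hw₂
  have hint (a b : ℝ) (ha : 0 ≤ a) (hab : a ≤ b) (hb : b ≤ 1) :
      IntervalIntegrable (fun x => w x * hat L (m + 1) x) volume a b :=
    ((hw.1.mul (continuous_hat L _).continuousOn).mono
      (by rw [uIcc_of_le hab]; exact Icc_subset_Icc ha hb)).intervalIntegrable
  rw [setIntegral_mul_hat hm, ← intervalIntegral.integral_add_adjacent_intervals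
    (b := (m + 1) * gridh L) (hint _ _ (by positivity) (by nlinarith) (by nlinarith))
    (hint _ _ (by positivity) (by nlinarith) h₁), integral_affine_mul_hat_left hw₁,
    integral_affine_mul_hat_right fun x hx => hw₂ x ⟨hx.1, by linarith [hx.2]⟩, massStencil]
  push_cast
  ring_nf

theorem integral_polynomial_mul_hat (P : ℝ[X]) {m : ℕ} (hm : m + 1 ≤ 2 ^ L) :
    ∫ x in Ioo (0 : ℝ) 1, P.eval x * hat L (m + 1) x =
      (momentPoly (tent (gridh L)) (-gridh L) (gridh L) P).eval ((m + 1) * gridh L) := by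
  set c := ((m : ℝ) + 1) * gridh L
  rw [setIntegral_mul_hat hm, eval_momentPoly ((continuous_tent _).intervalIntegrable _ _)]
  calc ∫ x in (m * gridh L)..((m + 2) * gridh L), P.eval x * hat L (m + 1) x
      = ∫ x in (m * gridh L)..((m + 2) * gridh L),
          (fun t => P.eval (c + t) * tent (gridh L) t) (x - c) :=
        intervalIntegral.integral_congr fun x _ => by simp [hat_eq_tent, c]
    _ = ∫ t in (-gridh L)..(gridh L), P.eval (c + t) * tent (gridh L) t := by
        rw [intervalIntegral.integral_comp_sub_right
          (fun t => P.eval (c + t) * tent (gridh L) t) c]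
        congr 1 <;> ring

theorem massStencil_eq_of_isL2Projection {u w : ℝ → ℝ} (hw : PL L w)
    (hproj : ∀ φ : ℝ → ℝ, PL0 L φ → ∫ x in Ioo (0 : ℝ) 1, (w x - u x) * φ x = 0)
    {P : ℝ[X]} {m : ℕ} (hm : m + 1 ≤ 2 ^ L)
    (hP : ∀ x ∈ Ioo (m * gridh L) ((m + 2) * gridh L), u x = P.eval x) :
    massStencil (fun k => w (k * gridh L)) m = 6 / gridh L *
      (momentPoly (tent (gridh L)) (-gridh L) (gridh L) P).eval ((m + 1) * gridh L) := by
  have huP : (fun x => u x * hat L (m + 1) x) = fun x => P.eval x * hat L (m + 1) x := by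
    funext x
    by_cases hx : x ∈ Ioo (m * gridh L) ((m + 2) * gridh L)
    · rw [hP x hx]
    · rw [hat_succ_eq_zero hx, mul_zero, mul_zero]
  have hint {f : ℝ → ℝ} (hf : ContinuousOn f (Icc 0 1)) :
      IntegrableOn (fun x => f x * hat L (m + 1) x) (Ioo 0 1) :=
    ((hf.mul (continuous_hat L _).continuousOn).integrableOn_Icc).mono_set Ioo_subset_Icc_self
  have hrel := hproj _ (hat_succ_mem_PL0 hm)
  simp_rw [sub_mul] at hrel
  rw [integral_sub (hint hw.1) (huP ▸ hint P.continuous.continuousOn), sub_eq_zero,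
    integral_mul_hat_of_PL hw hm, huP, integral_polynomial_mul_hat P hm] at hrel
  rw [← hrel, ← mul_assoc, div_mul_div_cancel₀ (gridh_pos L).ne', div_self (by norm_num),
    one_mul]

theorem exists_massStencil_eq_of_eqOn {u w : ℝ → ℝ} (hw : PL L w)
    (hproj : ∀ φ : ℝ → ℝ, PL0 L φ → ∫ x in Ioo (0 : ℝ) 1, (w x - u x) * φ x = 0)
    {P : ℝ[X]} {a b : ℝ} (hb : b ≤ 1) (hP : ∀ x ∈ Icc a b, u x = P.eval x) :
    ∃ G : ℝ[X], G.natDegree ≤ P.natDegree ∧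
      ∀ m : ℕ, ⌈a / gridh L⌉₊ ≤ m → m + 2 ≤ ⌊b / gridh L⌋₊ →
        massStencil (fun k => w (k * gridh L)) m = G.eval (m : ℝ) := by
  have hh := gridh_pos L
  set M := momentPoly (tent (gridh L)) (-gridh L) (gridh L) P
  refine ⟨C (6 / gridh L) * M.comp (C (gridh L) * (X + 1)), ?_, fun m ha hb' => ?_⟩
  · refine (natDegree_C_mul_le _ _).trans (natDegree_comp_le.trans ?_)
    have hlin : (C (gridh L) * (X + 1)).natDegree ≤ 1 :=
      (natDegree_C_mul_le _ _).trans (natDegree_add_le_of_degree_le (by simp) (by simp))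
    nlinarith [natDegree_momentPoly_le (tent (gridh L)) (-gridh L) (gridh L) P]
  have ham : a ≤ m * gridh L := (div_le_iff₀ hh).1 (Nat.ceil_le.1 ha)
  have hmb : (m + 2) * gridh L ≤ b :=
    (le_div_iff₀ hh).1 (by exact_mod_cast (Nat.le_floor_iff' (by omega)).1 hb')
  have hm : m + 2 ≤ 2 ^ L + 1 := by
    have : ((m + 2 : ℕ) : ℝ) ≤ ((2 ^ L + 1 : ℕ) : ℝ) := by
      rw [← one_div_gridh, le_div_iff₀ hh]
      push_cast
      linarith
    exact_mod_cast this
  rw [massStencil_eq_of_isL2Projection hw hproj (by omega)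
    fun x hx => hP x ⟨ham.trans hx.1.le, hx.2.le.trans hmb⟩]
  simp only [M, eval_mul, eval_C, eval_comp, eval_add, eval_X, eval_one]
  ring_nf

end L2Projection

theorem stmt5_general (p L : ℕ) (hL : 0 < L) (κ : ℝ) (hκ : 0 < κ)
    (u : ℝ → ℝ)
    (hpoly : ∃ P₁ P₂ P₃ : Polynomial ℝ,
      P₁.natDegree ≤ p ∧ P₂.natDegree ≤ p ∧ P₃.natDegree ≤ p ∧
      (∀ x ∈ Icc (0:ℝ) (min (1/4) κ), u x = P₁.eval x) ∧
      (∀ x ∈ Icc (min (1/4) κ) (1 - min (1/4) κ), u x = P₂.eval x) ∧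
      (∀ x ∈ Icc (1 - min (1/4) κ) 1, u x = P₃.eval x))
    (w : ℝ → ℝ) (hw : PL0 L w)
    (hproj : ∀ φ : ℝ → ℝ, PL0 L φ → ∫ x in Ioo (0:ℝ) 1, (w x - u x) * φ x = 0) :
    HasQTT L (fun i : Fin (2^L) => w ((((i:ℕ):ℝ)+1) * gridh L)) (5 * (p + 9)) := by
  obtain ⟨P₁, P₂, P₃, hd₁, hd₂, hd₃, hu₁, hu₂, hu₃⟩ := hpoly
  have hκ₀ : 0 ≤ min (1 / 4) κ := le_min (by norm_num) hκ.le
  have hκ₁ : min (1 / 4) κ ≤ 1 / 4 := min_le_left _ _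
  obtain ⟨G₁, hG₁, h₁⟩ := exists_massStencil_eq_of_eqOn hw.1 hproj (by linarith) hu₁
  obtain ⟨G₂, hG₂, h₂⟩ := exists_massStencil_eq_of_eqOn hw.1 hproj (by linarith) hu₂
  obtain ⟨G₃, hG₃, h₃⟩ := exists_massStencil_eq_of_eqOn hw.1 hproj le_rfl hu₃
  have hab : min (1 / 4) κ / gridh L ≤ (1 - min (1 / 4) κ) / gridh L :=
    div_le_div_of_nonneg_right (by linarith) (gridh_pos L).le
  have h := hasQTT_of_massStencil_eq_polynomial hL (hG₁.trans hd₁) (hG₂.trans hd₂)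
    (hG₃.trans hd₃) (Nat.ceil_le_floor_add_one _) (Nat.ceil_le_floor_add_one _)
    (Nat.ceil_mono hab) (fun m => h₁ m (by simp)) h₂
    (fun m hm hm' => h₃ m hm (by rwa [one_div_gridh, Nat.floor_natCast]))
    (r := 5 * (p + 9)) (by omega)
  simpa using h

/-- QTT ranks of the `L²` projection onto `V^L₀`: if `u` is continuous
on `[0,1]`, polynomial of degree `≤ p` on each subinterval of
`T^hp_κ = {0, min(1/4,κ), 1-min(1/4,κ), 1}`, and `u(0) = u(1) = 0`, then any
`L²(I)`-orthogonal projection `w` of `u` onto `V^L₀` has a vector of nodal values at the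
interior nodes of `T_L` admitting a QTT decomposition with ranks bounded by `5(p+9)`. -/
theorem stmt5 (p L : ℕ) (hp : 0 < p) (hL : 0 < L) (κ : ℝ) (hκ : 0 < κ)
    (u : ℝ → ℝ) (hu : ContinuousOn u (Icc (0:ℝ) 1))
    (hu0 : u 0 = 0) (hu1 : u 1 = 0)
    (hpoly : ∃ P₁ P₂ P₃ : Polynomial ℝ,
      P₁.natDegree ≤ p ∧ P₂.natDegree ≤ p ∧ P₃.natDegree ≤ p ∧
      (∀ x ∈ Icc (0:ℝ) (min (1/4) κ), u x = P₁.eval x) ∧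
      (∀ x ∈ Icc (min (1/4) κ) (1 - min (1/4) κ), u x = P₂.eval x) ∧
      (∀ x ∈ Icc (1 - min (1/4) κ) 1, u x = P₃.eval x))
    (w : ℝ → ℝ) (hw : PL0 L w)
    (hproj : ∀ φ : ℝ → ℝ, PL0 L φ → ∫ x in Ioo (0:ℝ) 1, (w x - u x) * φ x = 0) :
    HasQTT L (fun i : Fin (2^L) => w ((((i:ℕ):ℝ)+1) * gridh L)) (5 * (p + 9)) :=
  stmt5_general p L hL κ hκ u hpoly w hw hproj
end

section
/- Let 0 < δ < 1, f ∈ L²(I), and c ∈ L^∞(I) with c(x) ≥ c_min > 0 on I, and let u_δ ∈ H²(I) be the solution of −δ²u_δ'' + c u_δ = f on I with u_δ(0) = u_δ(1) = 0. Then there exists C > 0, independent of δ and f, such that δ²‖u_δ‖_{H²(I)} + δ‖u_δ‖_{H¹(I)} + ‖u_δ‖_{L²(I)} ≤ C ‖f‖_{L²(I)}. -/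
open MeasureTheory Set Polynomial

/-! Testing the equation with `u` and integrating by parts gives the energy identity
`∫ f u = ∫ c u² + δ² ∫ u'²`, hence `c_min² ‖u‖² ≤ ‖f‖²` and `c_min δ² ‖u'‖² ≤ ‖f‖²`; the equation
itself then bounds `δ⁴ ‖u''‖² = ‖c u - f‖²`. For `δ < 1` each term on the left is at most
`(‖u‖² + δ² ‖u'‖² + δ⁴ ‖u''‖²)^(1/2)`.

`MemL2 u''` only makes `u''²` measurable, not `u''`. Where `u ≠ 0` the equation recovers `u''`
measurably from `c u` and `f`. Past the supremum `a` of the points up to which `u''` is measurable,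
the integral in the fundamental theorem of calculus for `u'` takes the junk value `0`, so `u'` is
constant there; as `u` must vanish somewhere in `(a, 1)`, this forces `u = u' = 0` on `[a, 1]`, and
the energy argument runs on `[0, a]`. -/

lemma L2sq_nonneg (v : ℝ → ℝ) : 0 ≤ L2sq v :=
  setIntegral_nonneg measurableSet_Ioo fun _ _ => sq_nonneg _

lemma sq_mul_sqrt_add_mul_sqrt_add_sqrt_le {δ A B D : ℝ} (hδ0 : 0 ≤ δ) (hδ1 : δ ≤ 1)
    (hA : 0 ≤ A) (hB : 0 ≤ B) (hD : 0 ≤ D) :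
    δ ^ 2 * √(A + B + D) + δ * √(A + B) + √A ≤ 3 * √(A + δ ^ 2 * B + δ ^ 4 * D) := by
  have hmul : ∀ t, 0 ≤ t → ∀ X, t * √X = √(t ^ 2 * X) := fun t ht X => by
    rw [Real.sqrt_mul (sq_nonneg t), Real.sqrt_sq ht]
  have hδ2 : δ ^ 2 ≤ 1 := pow_le_one₀ hδ0 hδ1
  have hδ4 : δ ^ 4 ≤ δ ^ 2 := pow_le_pow_of_le_one hδ0 hδ1 (by norm_num)
  rw [hmul _ (sq_nonneg δ), hmul _ hδ0]
  have h1 : √((δ ^ 2) ^ 2 * (A + B + D)) ≤ √(A + δ ^ 2 * B + δ ^ 4 * D) :=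
    Real.sqrt_le_sqrt (by nlinarith)
  have h2 : √(δ ^ 2 * (A + B)) ≤ √(A + δ ^ 2 * B + δ ^ 4 * D) :=
    Real.sqrt_le_sqrt (by nlinarith)
  have h3 : √A ≤ √(A + δ ^ 2 * B + δ ^ 4 * D) := Real.sqrt_le_sqrt (by nlinarith)
  linarith

lemma AEStronglyMeasurable.of_sq_of_sub_sq {α : Type*} [MeasurableSpace α] {μ : Measure α}
    {g f : α → ℝ} (hg : AEStronglyMeasurable g μ)
    (hf2 : AEStronglyMeasurable (fun x => f x ^ 2) μ)
    (hgf2 : AEStronglyMeasurable (fun x => (g x - f x) ^ 2) μ) (hg0 : ∀ᵐ x ∂μ, g x ≠ 0) :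
    AEStronglyMeasurable f μ := by
  -- `2 g f = g² + f² - (g - f)²`
  refine ((((hg.pow 2).add hf2).sub hgf2).mul
    (hg.const_mul 2).aemeasurable.inv.aestronglyMeasurable).congr ?_
  filter_upwards [hg0] with x hx
  simp only [Pi.mul_apply, Pi.sub_apply, Pi.add_apply, Pi.inv_apply, Pi.pow_apply]
  field_simp
  ring

lemma aestronglyMeasurable_restrict_Ioo_of_forall_lt {f : ℝ → ℝ} {c a : ℝ}
    (h : ∀ x < a, AEStronglyMeasurable f (volume.restrict (Ioo c x))) :
    AEStronglyMeasurable f (volume.restrict (Ioo c a)) := by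
  have hcover : Ioo c a = ⋃ q : {q : ℚ // (q : ℝ) < a}, Ioo c (q : ℝ) := by
    ext x
    simp only [mem_Ioo, mem_iUnion, Subtype.exists, exists_prop]
    constructor
    · rintro ⟨hcx, hxa⟩
      obtain ⟨q, hxq, hqa⟩ := exists_rat_btwn hxa
      exact ⟨q, hqa, hcx, hxq⟩
    · rintro ⟨q, hqa, hcx, hxq⟩
      exact ⟨hcx, hxq.trans hqa⟩
  rw [hcover, aestronglyMeasurable_iUnion_iff]
  exact fun q => h q q.2

lemma absolutelyContinuousOnInterval_const_add_intervalIntegral {g : ℝ → ℝ} {b : ℝ} (k : ℝ)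
    (hg : IntervalIntegrable g volume 0 b) :
    AbsolutelyContinuousOnInterval (fun x => k + ∫ t in 0..x, g t) 0 b :=
  AbsolutelyContinuousOnInterval.fun_add
    (by simpa [AbsolutelyContinuousOnInterval] using tendsto_const_nhds)
    (hg.absolutelyContinuousOnInterval_intervalIntegral left_mem_uIcc)

lemma ae_deriv_const_add_intervalIntegral_eq {g : ℝ → ℝ} {b : ℝ} (k : ℝ)
    (hg : IntervalIntegrable g volume 0 b) :
    ∀ᵐ x, x ∈ uIoc 0 b → deriv (fun x => k + ∫ t in 0..x, g t) x = g x := by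
  filter_upwards [hg.ae_hasDerivAt_integral] with x hx hxb
  exact ((hx (uIoc_subset_uIcc hxb) 0 left_mem_uIcc).const_add k).deriv

theorem integral_mul_eq_sub_integral_sq {u u' u'' : ℝ → ℝ} {b : ℝ} (hb : 0 ≤ b)
    (hu' : IntervalIntegrable u' volume 0 b) (hu'' : IntervalIntegrable u'' volume 0 b)
    (hu : ∀ x ∈ Icc 0 b, u x = u 0 + ∫ t in 0..x, u' t)
    (hu'_eq : ∀ x ∈ Icc 0 b, u' x = u' 0 + ∫ t in 0..x, u'' t) :
    ∫ x in 0..b, u x * u'' x = u b * u' b - u 0 * u' 0 - ∫ x in 0..b, u' x ^ 2 := by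
  have hIcc : ∀ x ∈ uIoc 0 b, x ∈ Icc 0 b := fun x hx => by
    rw [uIoc_of_le hb] at hx; exact Ioc_subset_Icc_self hx
  have hibp := (absolutelyContinuousOnInterval_const_add_intervalIntegral (u 0) hu'
    ).integral_mul_deriv_eq_deriv_mul
    (absolutelyContinuousOnInterval_const_add_intervalIntegral (u' 0) hu'')
  simp only [intervalIntegral.integral_same, add_zero, ← hu b ⟨hb, le_rfl⟩,
    ← hu'_eq b ⟨hb, le_rfl⟩] at hibp
  have hleft : ∫ x in 0..b, u x * u'' x
      = ∫ x in 0..b, (u 0 + ∫ t in 0..x, u' t) * deriv (fun x => u' 0 + ∫ t in 0..x, u'' t) x := by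
    refine intervalIntegral.integral_congr_ae ?_
    filter_upwards [ae_deriv_const_add_intervalIntegral_eq (u' 0) hu''] with x hx hxb
    rw [hx hxb, ← hu x (hIcc x hxb)]
  have hright : ∫ x in 0..b, u' x ^ 2
      = ∫ x in 0..b, deriv (fun x => u 0 + ∫ t in 0..x, u' t) x * (u' 0 + ∫ t in 0..x, u'' t) := by
    refine intervalIntegral.integral_congr_ae ?_
    filter_upwards [ae_deriv_const_add_intervalIntegral_eq (u 0) hu'] with x hx hxb
    rw [hx hxb, ← hu'_eq x (hIcc x hxb), sq]
  rw [hleft, hright, hibp]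

lemma sub_eq_integral_of_eq_add_integral {v v' : ℝ → ℝ} {b x y : ℝ}
    (hv : ∀ x ∈ Icc 0 b, v x = v 0 + ∫ t in 0..x, v' t) (hv' : IntervalIntegrable v' volume 0 b)
    (hx : x ∈ Icc 0 b) (hy : y ∈ Icc 0 b) :
    v y - v x = ∫ t in x..y, v' t := by
  have hsub : ∀ x ∈ Icc 0 b, uIcc 0 x ⊆ uIcc 0 b := fun x hx =>
    uIcc_subset_uIcc left_mem_uIcc (by rwa [uIcc_of_le (hx.1.trans hx.2)])
  rw [hv x hx, hv y hy, add_sub_add_left_eq_sub,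
    intervalIntegral.integral_interval_sub_left (hv'.mono_set (hsub y hy))
      (hv'.mono_set (hsub x hx))]

lemma eq_zero_of_eqOn_deriv_const {v v' : ℝ → ℝ} {a z k : ℝ}
    (hv : ∀ x ∈ Icc 0 1, v x = v 0 + ∫ t in 0..x, v' t) (hv' : IntervalIntegrable v' volume 0 1)
    (ha : 0 ≤ a) (hz : z ∈ Ioo a 1) (hk : ∀ x ∈ Ioc a 1, v' x = k) (hvz : v z = 0)
    (hv1 : v 1 = 0) : k = 0 ∧ ∀ x ∈ Icc a 1, v x = 0 := by
  have hsub : Icc a 1 ⊆ Icc 0 1 := Icc_subset_Icc_left ha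
  have hzI : z ∈ Icc a 1 := Ioo_subset_Icc_self hz
  have haffine : ∀ x ∈ Icc a 1, v x = k * (x - z) := by
    intro x hx
    have hslope : ∫ t in z..x, v' t = ∫ t in z..x, k := by
      refine intervalIntegral.integral_congr_ae (Filter.Eventually.of_forall fun t ht => hk t ?_)
      exact ⟨(le_min hzI.1 hx.1).trans_lt ht.1, ht.2.trans (max_le hzI.2 hx.2)⟩
    have := sub_eq_integral_of_eq_add_integral hv hv' (hsub hzI) (hsub hx)
    rw [hslope, intervalIntegral.integral_const, smul_eq_mul, hvz] at this
    linarith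
  have hk0 : k = 0 := by
    have h1 := haffine 1 ⟨hz.1.le.trans hz.2.le, le_rfl⟩
    rw [hv1, eq_comm, mul_eq_zero] at h1
    exact h1.resolve_right (sub_ne_zero.mpr hz.2.ne')
  exact ⟨hk0, fun x hx => by rw [haffine x hx, hk0, zero_mul]⟩

lemma energy_estimate {δ cmin cmax b : ℝ} {c f u u' u'' : ℝ → ℝ} (hb : 0 ≤ b) (hcmin : 0 < cmin)
    (hcmeas : Measurable c) (hc : ∀ x ∈ Ioc 0 b, c x ∈ Icc cmin cmax)
    (hu : ContinuousOn u (Icc 0 b)) (hu' : ContinuousOn u' (Icc 0 b))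
    (ftc_u : ∀ x ∈ Icc 0 b, u x = u 0 + ∫ t in 0..x, u' t)
    (ftc_u' : ∀ x ∈ Icc 0 b, u' x = u' 0 + ∫ t in 0..x, u'' t)
    (hu'' : IntervalIntegrable u'' volume 0 b) (hf : IntegrableOn (fun x => f x ^ 2) (Ioc 0 b))
    (heq : ∀ᵐ x ∂volume.restrict (Ioc 0 b), -δ ^ 2 * u'' x + c x * u x = f x)
    (hu0 : u 0 = 0) (hub : u b = 0) :
    cmin ^ 2 * ∫ x in Ioc 0 b, u x ^ 2 ≤ ∫ x in Ioc 0 b, f x ^ 2 ∧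
      cmin * (δ ^ 2 * ∫ x in Ioc 0 b, u' x ^ 2) ≤ ∫ x in Ioc 0 b, f x ^ 2 := by
  have hu2 : IntegrableOn (fun x => u x ^ 2) (Ioc 0 b) :=
    (hu.pow 2).integrableOn_Icc.mono_set Ioc_subset_Icc_self
  have hcu2 : IntegrableOn (fun x => c x * u x ^ 2) (Ioc 0 b) :=
    hu2.bdd_mul (c := cmax) hcmeas.aestronglyMeasurable <|
      (ae_restrict_mem measurableSet_Ioc).mono fun x hx => by
        rw [Real.norm_eq_abs, abs_of_pos (hcmin.trans_le (hc x hx).1)]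
        exact (hc x hx).2
  have huu'' : IntegrableOn (fun x => u x * u'' x) (Ioc 0 b) := by
    rw [← intervalIntegrable_iff_integrableOn_Ioc_of_le hb]
    exact hu''.continuousOn_mul (by rwa [uIcc_of_le hb])
  have hfu_eq : (fun x => f x * u x)
      =ᵐ[volume.restrict (Ioc 0 b)] fun x => c x * u x ^ 2 - δ ^ 2 * (u x * u'' x) := by
    filter_upwards [heq] with x hx
    rw [← hx]; ring
  have hfu : IntegrableOn (fun x => f x * u x) (Ioc 0 b) :=
    (hcu2.sub (huu''.const_mul _)).congr hfu_eq.symm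
  have hibp : ∫ x in Ioc 0 b, u x * u'' x = -∫ x in Ioc 0 b, u' x ^ 2 := by
    have := integral_mul_eq_sub_integral_sq hb
      (hu'.intervalIntegrable_of_Icc hb) hu'' ftc_u ftc_u'
    rwa [hu0, hub, zero_mul, zero_mul, sub_zero, zero_sub, intervalIntegral.integral_of_le hb,
      intervalIntegral.integral_of_le hb] at this
  have hidentity : ∫ x in Ioc 0 b, f x * u x
      = (∫ x in Ioc 0 b, c x * u x ^ 2) + δ ^ 2 * ∫ x in Ioc 0 b, u' x ^ 2 := by
    rw [integral_congr_ae hfu_eq, integral_sub hcu2 (huu''.const_mul _), integral_const_mul, hibp]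
    ring
  have hcoercive : cmin * ∫ x in Ioc 0 b, u x ^ 2 ≤ ∫ x in Ioc 0 b, c x * u x ^ 2 := by
    rw [← integral_const_mul]
    exact setIntegral_mono_on (hu2.const_mul _) hcu2 measurableSet_Ioc fun x hx =>
      mul_le_mul_of_nonneg_right (hc x hx).1 (sq_nonneg _)
  have hyoung : 2 * cmin * ∫ x in Ioc 0 b, f x * u x
      ≤ (∫ x in Ioc 0 b, f x ^ 2) + cmin ^ 2 * ∫ x in Ioc 0 b, u x ^ 2 := by
    rw [← integral_const_mul, ← integral_const_mul, ← integral_add hf (hu2.const_mul _)]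
    exact integral_mono (hfu.const_mul _) (hf.add (hu2.const_mul _)) fun x => by
      nlinarith [sq_nonneg (f x - cmin * u x)]
  have hA : 0 ≤ ∫ x in Ioc 0 b, u x ^ 2 :=
    setIntegral_nonneg measurableSet_Ioc fun _ _ => sq_nonneg _
  have hB : 0 ≤ cmin * (δ ^ 2 * ∫ x in Ioc 0 b, u' x ^ 2) :=
    mul_nonneg hcmin.le (mul_nonneg (sq_nonneg δ)
      (setIntegral_nonneg measurableSet_Ioc fun _ _ => sq_nonneg _))
  have hsum : cmin ^ 2 * (∫ x in Ioc 0 b, u x ^ 2)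
      + 2 * (cmin * (δ ^ 2 * ∫ x in Ioc 0 b, u' x ^ 2)) ≤ ∫ x in Ioc 0 b, f x ^ 2 := by
    nlinarith
  exact ⟨by linarith, by linarith [mul_nonneg (sq_nonneg cmin) hA]⟩

lemma L2sq_eq_setIntegral_Ioc_of_eqOn_zero {v : ℝ → ℝ} {a : ℝ} (ha : a ≤ 1)
    (hv : ∀ x ∈ Ioc a 1, v x = 0) : L2sq v = ∫ x in Ioc 0 a, v x ^ 2 := by
  rw [L2sq, ← integral_Ioc_eq_integral_Ioo]
  refine setIntegral_eq_of_subset_of_forall_sdiff_eq_zero measurableSet_Ioc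
    (Ioc_subset_Ioc_right ha) fun x hx => ?_
  rw [hv x ⟨not_le.1 fun hxa => hx.2 ⟨hx.1.1, hxa⟩, hx.1.2⟩, sq, zero_mul]

namespace StrongSol0

variable {δ : ℝ} {c f u u' u'' : ℝ → ℝ}

lemma aestronglyMeasurable_of_ne_zero (hsol : StrongSol0 δ c f u u' u'') (hf : MemL2 f)
    (hδ : δ ≠ 0) (hcmeas : Measurable c) (hc : ∀ x ∈ Ioo 0 1, c x ≠ 0) {s : Set ℝ}
    (hs : s ⊆ Ioo 0 1) (hsm : MeasurableSet s) (hu : ∀ x ∈ s, u x ≠ 0) :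
    AEStronglyMeasurable u'' (volume.restrict s) := by
  obtain ⟨⟨⟨-, hu_cont, -, -⟩, -, -, -, hu''2⟩, -, -, heq⟩ := hsol
  have hle : volume.restrict s ≤ volume.restrict (Ioo 0 1) := Measure.restrict_mono hs le_rfl
  have hδu'' : AEStronglyMeasurable (fun x => δ ^ 2 * u'' x) (volume.restrict s) := by
    refine AEStronglyMeasurable.of_sq_of_sub_sq (g := fun x => c x * u x)
      (hcmeas.aestronglyMeasurable.mul
        ((hu_cont.mono (hs.trans Ioo_subset_Icc_self)).aestronglyMeasurable hsm))
      ?_ ?_ (ae_restrict_of_forall_mem hsm fun x hx => mul_ne_zero (hc x (hs hx)) (hu x hx))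
    · refine ((hu''2.aestronglyMeasurable.const_mul (δ ^ 4)).congr ?_).mono_measure hle
      exact Filter.Eventually.of_forall fun x => by simp only; ring
    · refine (hf.aestronglyMeasurable.congr ?_).mono_measure hle
      filter_upwards [heq] with x hx
      rw [← hx]; ring
  refine (hδu''.const_mul (δ ^ 2)⁻¹).congr (Filter.Eventually.of_forall fun x => ?_)
  field_simp

lemma exists_vanishing_tail (hsol : StrongSol0 δ c f u u' u'') (hf : MemL2 f) (hδ : δ ≠ 0)
    (hcmeas : Measurable c) (hc : ∀ x ∈ Ioo 0 1, c x ≠ 0) :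
    ∃ a ∈ Icc (0 : ℝ) 1, IntervalIntegrable u'' volume 0 a ∧
      (∀ x ∈ Icc a 1, u x = 0) ∧ ∀ x ∈ Ioc a 1, u' x = 0 := by
  obtain ⟨⟨⟨ftc_u, -, -, -⟩, ftc_u', hu'_cont, -, hu''2⟩, -, hu1, -⟩ := id hsol
  set S := {x ∈ Icc (0 : ℝ) 1 | AEStronglyMeasurable u'' (volume.restrict (Ioo 0 x))}
  have hS0 : (0 : ℝ) ∈ S := ⟨left_mem_Icc.2 zero_le_one, by simp⟩
  have hSb : BddAbove S := ⟨1, fun x hx => hx.1.2⟩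
  set a := sSup S
  have ha : a ∈ Icc (0 : ℝ) 1 := ⟨le_csSup hSb hS0, csSup_le ⟨0, hS0⟩ fun x hx => hx.1.2⟩
  have hmeas : AEStronglyMeasurable u'' (volume.restrict (Ioo 0 a)) :=
    aestronglyMeasurable_restrict_Ioo_of_forall_lt fun x hx => by
      obtain ⟨y, hy, hxy⟩ := exists_lt_of_lt_csSup ⟨0, hS0⟩ hx
      exact hy.2.mono_measure (Measure.restrict_mono (Ioo_subset_Ioo_right hxy.le) le_rfl)
  have hint : IntervalIntegrable u'' volume 0 a := by
    rw [intervalIntegrable_iff_integrableOn_Ioo_of_le ha.1]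
    exact ((memLp_two_iff_integrable_sq hmeas).2
      (hu''2.mono_set (Ioo_subset_Ioo_right ha.2))).integrable one_le_two
  -- past `a` the integral in the FTC for `u'` takes its junk value `0`
  have hconst : ∀ x ∈ Ioc a 1, u' x = u' 0 := fun x hx => by
    have hx_not : ¬ IntervalIntegrable u'' volume 0 x := fun hx_int =>
      hx.1.not_ge <| le_csSup hSb
        ⟨⟨ha.1.trans hx.1.le, hx.2⟩, (hx_int.1.mono_set Ioo_subset_Ioc_self).aestronglyMeasurable⟩
    rw [ftc_u' x ⟨ha.1.trans hx.1.le, hx.2⟩, intervalIntegral.integral_undef hx_not, add_zero]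
  rcases ha.2.eq_or_lt with ha1 | ha1
  · refine ⟨a, ha, hint, fun x hx => ?_, fun x hx => absurd hx.2 (ha1 ▸ hx.1).not_ge⟩
    rwa [le_antisymm hx.2 (ha1 ▸ hx.1)]
  obtain ⟨z, hz, huz⟩ : ∃ z ∈ Ioo a 1, u z = 0 := by
    by_contra! hne
    have h1 : AEStronglyMeasurable u'' (volume.restrict (Ioo 0 1)) := by
      rw [← Ioc_union_Ioo_eq_Ioo ha.1 ha1, aestronglyMeasurable_union_iff,
        ← Measure.restrict_congr_set Ioo_ae_eq_Ioc]
      exact ⟨hmeas, hsol.aestronglyMeasurable_of_ne_zero hf hδ hcmeas hc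
        (Ioo_subset_Ioo_left ha.1) measurableSet_Ioo hne⟩
    exact ha1.not_ge (le_csSup hSb ⟨right_mem_Icc.2 zero_le_one, h1⟩)
  obtain ⟨hk, hu_zero⟩ := eq_zero_of_eqOn_deriv_const ftc_u
    (hu'_cont.intervalIntegrable_of_Icc zero_le_one) ha.1 hz hconst huz hu1
  exact ⟨a, ha, hint, hu_zero, fun x hx => (hconst x hx).trans hk⟩

lemma energy_bound {cmin cmax : ℝ} (hsol : StrongSol0 δ c f u u' u'') (hf : MemL2 f)
    (hδ : δ ≠ 0) (hcmin : 0 < cmin) (hcmeas : Measurable c)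
    (hcl : ∀ x ∈ Icc (0 : ℝ) 1, cmin ≤ c x) (hcu : ∀ x ∈ Icc (0 : ℝ) 1, c x ≤ cmax) :
    cmin ^ 2 * L2sq u ≤ L2sq f ∧ cmin * (δ ^ 2 * L2sq u') ≤ L2sq f := by
  obtain ⟨a, ha, hint, hu_zero, hu'_zero⟩ := hsol.exists_vanishing_tail hf hδ hcmeas
    fun x hx => (hcmin.trans_le (hcl x (Ioo_subset_Icc_self hx))).ne'
  obtain ⟨⟨⟨ftc_u, hu_cont, -, -⟩, ftc_u', hu'_cont, -, -⟩, hu0, -, heq⟩ := hsol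
  have hIcc : Icc 0 a ⊆ Icc (0 : ℝ) 1 := Icc_subset_Icc_right ha.2
  have hIoc : Ioc 0 a ⊆ Ioc (0 : ℝ) 1 := Ioc_subset_Ioc_right ha.2
  have hf' : IntegrableOn (fun x => f x ^ 2) (Ioc 0 1) := hf.congr_set_ae Ioo_ae_eq_Ioc.symm
  rw [Measure.restrict_congr_set Ioo_ae_eq_Ioc] at heq
  have hE := energy_estimate ha.1 hcmin hcmeas
    (fun x hx => ⟨hcl x (Ioc_subset_Icc_self (hIoc hx)), hcu x (Ioc_subset_Icc_self (hIoc hx))⟩)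
    (hu_cont.mono hIcc) (hu'_cont.mono hIcc) (fun x hx => ftc_u x (hIcc hx))
    (fun x hx => ftc_u' x (hIcc hx)) hint (hf'.mono_set hIoc)
    (ae_restrict_of_ae_restrict_of_subset hIoc heq) hu0 (hu_zero a ⟨le_rfl, ha.2⟩)
  have hfle : ∫ x in Ioc 0 a, f x ^ 2 ≤ L2sq f := by
    rw [L2sq, ← integral_Ioc_eq_integral_Ioo]
    exact setIntegral_mono_set hf' (Filter.Eventually.of_forall fun _ => sq_nonneg _)
      hIoc.eventuallyLE
  rw [L2sq_eq_setIntegral_Ioc_of_eqOn_zero ha.2 fun x hx => hu_zero x (Ioc_subset_Icc_self hx),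
    L2sq_eq_setIntegral_Ioc_of_eqOn_zero ha.2 hu'_zero]
  exact ⟨hE.1.trans hfle, hE.2.trans hfle⟩

lemma L2sq_secondDeriv_le {cmax : ℝ} (hsol : StrongSol0 δ c f u u' u'') (hf : MemL2 f)
    (hc : ∀ x ∈ Ioo (0 : ℝ) 1, |c x| ≤ cmax) :
    δ ^ 4 * L2sq u'' ≤ 2 * cmax ^ 2 * L2sq u + 2 * L2sq f := by
  obtain ⟨⟨⟨-, -, hu2, -⟩, -, -, -, hu''2⟩, -, -, heq⟩ := hsol
  have hsq_eq : (fun x => δ ^ 4 * u'' x ^ 2)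
      =ᵐ[volume.restrict (Ioo 0 1)] fun x => (c x * u x - f x) ^ 2 := by
    filter_upwards [heq] with x hx
    rw [← hx]; ring
  have hbound : ∫ x in Ioo (0 : ℝ) 1, (c x * u x - f x) ^ 2
      ≤ ∫ x in Ioo (0 : ℝ) 1, (2 * cmax ^ 2 * u x ^ 2 + 2 * f x ^ 2) := by
    refine setIntegral_mono_on ((hu''2.const_mul _).congr hsq_eq)
      ((hu2.const_mul _).add (hf.const_mul _)) measurableSet_Ioo fun x hx => ?_
    have hc2 : c x ^ 2 ≤ cmax ^ 2 := sq_le_sq' (abs_le.1 (hc x hx)).1 (abs_le.1 (hc x hx)).2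
    nlinarith [sq_nonneg (c x * u x + f x), mul_le_mul_of_nonneg_right hc2 (sq_nonneg (u x))]
  rw [L2sq, ← integral_const_mul, integral_congr_ae hsq_eq]
  rwa [integral_add (hu2.const_mul _) (hf.const_mul _), integral_const_mul,
    integral_const_mul] at hbound

lemma weighted_L2sq_le {cmin cmax : ℝ} (hsol : StrongSol0 δ c f u u' u'') (hf : MemL2 f)
    (hδ : δ ≠ 0) (hcmin : 0 < cmin) (hcmeas : Measurable c)
    (hcl : ∀ x ∈ Icc (0 : ℝ) 1, cmin ≤ c x) (hcu : ∀ x ∈ Icc (0 : ℝ) 1, c x ≤ cmax) :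
    L2sq u + δ ^ 2 * L2sq u' + δ ^ 4 * L2sq u''
      ≤ ((1 + 2 * cmax ^ 2) / cmin ^ 2 + 1 / cmin + 2) * L2sq f := by
  obtain ⟨hu, hu'⟩ := hsol.energy_bound hf hδ hcmin hcmeas hcl hcu
  have hu'' := hsol.L2sq_secondDeriv_le hf (cmax := cmax) fun x hx =>
    have hx' := Ioo_subset_Icc_self hx
    abs_le.2 ⟨by linarith [hcl x hx', hcu x hx'], hcu x hx'⟩
  have hu_div : L2sq u ≤ L2sq f / cmin ^ 2 := by rw [le_div_iff₀ (by positivity)]; linarith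
  have hu'_div : δ ^ 2 * L2sq u' ≤ L2sq f / cmin := by rw [le_div_iff₀ hcmin]; linarith
  calc L2sq u + δ ^ 2 * L2sq u' + δ ^ 4 * L2sq u''
      ≤ L2sq f / cmin ^ 2 + L2sq f / cmin + (2 * cmax ^ 2 * (L2sq f / cmin ^ 2) + 2 * L2sq f) := by
        nlinarith [mul_le_mul_of_nonneg_left hu_div (by positivity : (0 : ℝ) ≤ 2 * cmax ^ 2)]
    _ = ((1 + 2 * cmax ^ 2) / cmin ^ 2 + 1 / cmin + 2) * L2sq f := by ring

end StrongSol0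

/-- [Melenk–Schwab, Lemma 2.1]: for `f ∈ L²(I)`, `c ∈ L^∞(I)` with
`c ≥ c_min > 0`, and `u_δ ∈ H²(I)` the homogeneous Dirichlet solution of
`-δ²u'' + cu = f`, there is `C > 0` independent of `δ` and `f` with
`δ²‖u‖_{H²} + δ‖u‖_{H¹} + ‖u‖_{L²} ≤ C‖f‖_{L²}`. -/
theorem stmt6 (c : ℝ → ℝ) (cmin cmax : ℝ) (hcmin : 0 < cmin)
    (hcmeas : Measurable c)
    (hcl : ∀ x ∈ Icc (0:ℝ) 1, cmin ≤ c x) (hcu : ∀ x ∈ Icc (0:ℝ) 1, c x ≤ cmax) :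
    ∃ C : ℝ, 0 < C ∧
      ∀ δ : ℝ, 0 < δ → δ < 1 →
        ∀ f u u' u'' : ℝ → ℝ, MemL2 f → StrongSol0 δ c f u u' u'' →
          δ^2 * H2norm u u' u'' + δ * H1norm u u' + L2norm u ≤ C * L2norm f := by
  set K := (1 + 2 * cmax ^ 2) / cmin ^ 2 + 1 / cmin + 2
  have hK : 0 < K := by positivity
  refine ⟨3 * √K, by positivity, fun δ hδ0 hδ1 f u u' u'' hf hsol => ?_⟩
  calc δ ^ 2 * H2norm u u' u'' + δ * H1norm u u' + L2norm u
      ≤ 3 * √(L2sq u + δ ^ 2 * L2sq u' + δ ^ 4 * L2sq u'') :=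
        sq_mul_sqrt_add_mul_sqrt_add_sqrt_le hδ0.le hδ1.le (L2sq_nonneg u) (L2sq_nonneg u')
          (L2sq_nonneg u'')
    _ ≤ 3 * √(K * L2sq f) := by
        gcongr
        exact hsol.weighted_L2sq_le hf hδ0.ne' hcmin hcmeas hcl hcu
    _ = 3 * √K * L2norm f := by rw [Real.sqrt_mul hK.le, L2norm]; ring
end
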